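/- arXiv:2101.07835 — 5 statements merged into one kernel-verified Lean document; each statement's English description precedes it below -/
import Mathlib

section
/- Let H be a real Hilbert space, ρ > 0, and Φ : B_ρ → H a C¹ function with derivative Lipschitz with constant γ. Set θ := sup_{x ∈ B_ρ} ‖Φ'(x)‖, M := 2(θ + ργ), and assume σ := inf_{y ∈ B_ρ} sup_{‖u‖=1} |⟨Φ(0), u⟩ − ⟨Φ'(0)(u), y⟩| > 0. Then for each r ∈ ]0, min{ρ, σ/(2M)}] there exists a unique x* ∈ S_r such that max{⟨Φ(x*), x* − x⟩, ⟨Φ(x), x* − x⟩} < 0 for all x ∈ B_r \ {x*}. -/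
open Metric

private lemma unit_diff_aux {H : Type*} [NormedAddCommGroup H] [NormedSpace ℝ H]
    (a b : H) (m : ℝ) (hm : 0 < m) (ha : m ≤ ‖a‖) (hb : m ≤ ‖b‖) :
    ‖‖a‖⁻¹ • a - ‖b‖⁻¹ • b‖ ≤ 2 / m * ‖a - b‖ := by
  have hA : 0 < ‖a‖ := hm.trans_le ha
  have hB : 0 < ‖b‖ := hm.trans_le hb
  have hrw : ‖a‖⁻¹ • a - ‖b‖⁻¹ • b = ‖a‖⁻¹ • (a - b) + (‖a‖⁻¹ - ‖b‖⁻¹) • b := by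
    rw [smul_sub, sub_smul]; abel
  have h1 : ‖‖a‖⁻¹ • a - ‖b‖⁻¹ • b‖ ≤ ‖a‖⁻¹ * ‖a - b‖ + |‖a‖⁻¹ - ‖b‖⁻¹| * ‖b‖ := by
    rw [hrw]
    refine (norm_add_le _ _).trans ?_
    rw [norm_smul, norm_smul, Real.norm_eq_abs, Real.norm_eq_abs,
      abs_of_pos (inv_pos.mpr hA)]
  have h2 : |‖a‖⁻¹ - ‖b‖⁻¹| * ‖b‖ = |‖b‖ - ‖a‖| / ‖a‖ := by
    have h : ‖a‖⁻¹ - ‖b‖⁻¹ = (‖b‖ - ‖a‖) / (‖a‖ * ‖b‖) := by field_simp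
    rw [h, abs_div, abs_of_pos (mul_pos hA hB)]
    field_simp
  have h3 : |‖b‖ - ‖a‖| ≤ ‖a - b‖ := by
    rw [norm_sub_rev]; exact abs_norm_sub_norm_le b a
  have h4 : ‖a‖⁻¹ ≤ m⁻¹ := by
    exact inv_anti₀ hm ha
  have hnn : (0:ℝ) ≤ ‖a - b‖ := norm_nonneg _
  calc ‖‖a‖⁻¹ • a - ‖b‖⁻¹ • b‖ ≤ ‖a‖⁻¹ * ‖a - b‖ + |‖b‖ - ‖a‖| / ‖a‖ := by
        rw [← h2]; exact h1
    _ ≤ m⁻¹ * ‖a - b‖ + ‖a - b‖ / ‖a‖ := by gcongr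
    _ ≤ m⁻¹ * ‖a - b‖ + ‖a - b‖ / m := by gcongr
    _ = 2 / m * ‖a - b‖ := by field_simp; ring

set_option maxHeartbeats 1000000 in
theorem stmt4 {H : Type*} [NormedAddCommGroup H] [InnerProductSpace ℝ H] [CompleteSpace H]
    (ρ γ : ℝ) (hρ : 0 < ρ) (hγ : 0 ≤ γ)
    (Φ : H → H) (Φ' : H → H →L[ℝ] H)
    (hdiff : ∀ x ∈ closedBall (0 : H) ρ, HasFDerivAt Φ (Φ' x) x)
    (hlip : ∀ x ∈ closedBall (0 : H) ρ, ∀ v ∈ closedBall (0 : H) ρ,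
      ‖Φ' x - Φ' v‖ ≤ γ * ‖x - v‖)
    (θ M σ : ℝ)
    (hθ : θ = sSup ((fun x => ‖Φ' x‖) '' closedBall (0 : H) ρ))
    (hM : M = 2 * (θ + ρ * γ))
    (hσ : σ = sInf ((fun y => sSup ((fun u => |inner ℝ (Φ 0) u - inner ℝ (Φ' 0 u) y|) ''
      sphere (0 : H) 1)) '' closedBall (0 : H) ρ))
    (hσpos : 0 < σ) :
    ∀ r : ℝ, 0 < r → r ≤ min ρ (σ / (2 * M)) →
      ∃! xs : H, xs ∈ sphere (0 : H) r ∧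
        ∀ x ∈ closedBall (0 : H) r, x ≠ xs →
          max (inner ℝ (Φ xs) (xs - x) : ℝ) (inner ℝ (Φ x) (xs - x)) < 0 := by
  intro r hr hrle
  have h0ρ : (0:H) ∈ closedBall (0:H) ρ := mem_closedBall_self hρ.le
  -- θ is an upper bound for ‖Φ' x‖
  have hθ0 : ∀ x ∈ closedBall (0:H) ρ, ‖Φ' x‖ ≤ θ := by
    intro x hx
    have hbdd : BddAbove ((fun x => ‖Φ' x‖) '' closedBall (0 : H) ρ) := by
      refine ⟨‖Φ' 0‖ + γ * ρ, ?_⟩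
      rintro - ⟨z, hz, rfl⟩
      have h1 : ‖Φ' z - Φ' 0‖ ≤ γ * ‖z - 0‖ := hlip z hz 0 h0ρ
      have h2 : ‖z - 0‖ ≤ ρ := by simpa [dist_eq_norm] using hz
      have h3 : ‖Φ' z‖ ≤ ‖Φ' z - Φ' 0‖ + ‖Φ' 0‖ := by
        simpa using norm_add_le (Φ' z - Φ' 0) (Φ' 0)
      have h4 : γ * ‖z - 0‖ ≤ γ * ρ := by nlinarith
      linarith
    rw [hθ]
    exact le_csSup hbdd ⟨x, hx, rfl⟩
  have hθnn : 0 ≤ θ := le_trans (norm_nonneg _) (hθ0 0 h0ρ)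
  -- M is positive
  have hMpos : 0 < M := by
    by_contra hMle
    push_neg at hMle
    have h2M : 2 * M ≤ 0 := by linarith
    have hd0 : σ / (2 * M) ≤ 0 := by
      rcases lt_or_eq_of_le h2M with h | h
      · exact le_of_lt (div_neg_of_pos_of_neg hσpos h)
      · rw [h, div_zero]
    have := le_trans hrle (min_le_right _ _)
    linarith
  have hrρ : r ≤ ρ := le_trans hrle (min_le_left _ _)
  have hrσ : r ≤ σ / (2 * M) := le_trans hrle (min_le_right _ _)
  have h2Mr : 2 * M * r ≤ σ := by
    rw [le_div_iff₀ (by linarith : (0:ℝ) < 2 * M)] at hrσ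
    linarith
  have h2θM : 2 * θ ≤ M := by nlinarith
  have hθrσ : 4 * (θ * r) ≤ σ := by nlinarith
  -- Φ is θ-Lipschitz on the ball of radius ρ
  have hlipΦ : ∀ x ∈ closedBall (0:H) ρ, ∀ v ∈ closedBall (0:H) ρ,
      ‖Φ x - Φ v‖ ≤ θ * ‖x - v‖ := by
    intro x hx v hv
    exact Convex.norm_image_sub_le_of_norm_hasFDerivWithin_le
      (fun z hz => (hdiff z hz).hasFDerivWithinAt) hθ0 (convex_closedBall _ _) hv hx
  -- σ ≤ ‖Φ 0‖
  have hσle : σ ≤ ‖Φ 0‖ := by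
    have hbdd : BddBelow ((fun y => sSup ((fun u => |(inner ℝ (Φ 0) u : ℝ) -
        inner ℝ (Φ' 0 u) y|) '' sphere (0 : H) 1)) '' closedBall (0 : H) ρ) := by
      refine ⟨0, ?_⟩
      rintro - ⟨y, hy, rfl⟩
      exact Real.sSup_nonneg (by rintro - ⟨u, hu, rfl⟩; positivity)
    have h1 : σ ≤ sSup ((fun u => |(inner ℝ (Φ 0) u : ℝ) - inner ℝ (Φ' 0 u) (0:H)|) ''
        sphere (0 : H) 1) := by
      rw [hσ]
      exact csInf_le hbdd ⟨0, h0ρ, rfl⟩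
    refine h1.trans (Real.sSup_le ?_ (norm_nonneg _))
    rintro - ⟨u, hu, rfl⟩
    have hu1 : ‖u‖ = 1 := mem_sphere_zero_iff_norm.mp hu
    have h2 := abs_real_inner_le_norm (Φ 0) u
    simp only [inner_zero_right, sub_zero]
    rw [hu1, mul_one] at h2
    exact h2
  -- lower bound for ‖Φ x‖ on the ball of radius r
  have hball : closedBall (0:H) r ⊆ closedBall (0:H) ρ := closedBall_subset_closedBall hrρ
  have hlow : ∀ x ∈ closedBall (0:H) r, 3 * σ / 4 ≤ ‖Φ x‖ := by
    intro x hx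
    have hxρ := hball hx
    have h1 : ‖Φ x - Φ 0‖ ≤ θ * ‖x - 0‖ := hlipΦ x hxρ 0 h0ρ
    have h2 : ‖x - 0‖ ≤ r := by simpa [dist_eq_norm] using hx
    have h3 : ‖Φ 0‖ ≤ ‖Φ x‖ + ‖Φ 0 - Φ x‖ := by
      simpa using norm_add_le (Φ x) (Φ 0 - Φ x)
    have h3' : ‖Φ 0 - Φ x‖ ≤ θ * ‖x - 0‖ := by rwa [norm_sub_rev] at h1
    have h4 : θ * ‖x - 0‖ ≤ θ * r := by nlinarith
    nlinarith
  have hne : ∀ x ∈ closedBall (0:H) r, Φ x ≠ 0 := by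
    intro x hx h
    have h5 := hlow x hx
    rw [h, norm_zero] at h5
    linarith
  -- existence of a fixed point of x ↦ -(r • ‖Φ x‖⁻¹ • Φ x) via Banach
  have hexists : ∃ y : H, y ∈ closedBall (0:H) r ∧ -(r • ‖Φ y‖⁻¹ • Φ y) = y := by
    haveI : Nonempty (closedBall (0:H) r) := ⟨⟨0, mem_closedBall_self hr.le⟩⟩
    haveI : CompleteSpace (closedBall (0:H) r) := isClosed_closedBall.completeSpace_coe
    have hTmem : ∀ x : closedBall (0:H) r, -(r • ‖Φ (x:H)‖⁻¹ • Φ (x:H)) ∈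
        closedBall (0:H) r := by
      intro x
      have hΦ : Φ (x:H) ≠ 0 := hne _ x.2
      have hnorm : ‖-(r • ‖Φ (x:H)‖⁻¹ • Φ (x:H))‖ = r := by
        rw [norm_neg, norm_smul, norm_smul, norm_inv, norm_norm,
          inv_mul_cancel₀ (norm_ne_zero_iff.mpr hΦ), mul_one, Real.norm_eq_abs,
          abs_of_pos hr]
      simp [mem_closedBall, dist_eq_norm, hnorm]
    set T : closedBall (0:H) r → closedBall (0:H) r :=
      fun x => ⟨-(r • ‖Φ (x:H)‖⁻¹ • Φ (x:H)), hTmem x⟩ with hT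
    have hcontr : ContractingWith (2/3 : NNReal) T := by
      constructor
      · rw [← NNReal.coe_lt_coe]; norm_num
      refine LipschitzWith.of_dist_le_mul ?_
      intro x v
      rw [Subtype.dist_eq (T x) (T v), Subtype.dist_eq x v, dist_eq_norm, dist_eq_norm]
      have hx := x.2
      have hv := v.2
      have hΦx : 3 * σ / 4 ≤ ‖Φ (x:H)‖ := hlow _ hx
      have hΦv : 3 * σ / 4 ≤ ‖Φ (v:H)‖ := hlow _ hv
      have hm : (0:ℝ) < 3 * σ / 4 := by linarith
      have h1 : ‖(T x : H) - (T v : H)‖ =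
          r * ‖‖Φ (x:H)‖⁻¹ • Φ (x:H) - ‖Φ (v:H)‖⁻¹ • Φ (v:H)‖ := by
        show ‖-(r • ‖Φ (x:H)‖⁻¹ • Φ (x:H)) - -(r • ‖Φ (v:H)‖⁻¹ • Φ (v:H))‖ = _
        rw [← neg_sub', neg_sub, ← smul_sub, norm_smul, Real.norm_eq_abs, abs_of_pos hr,
          norm_sub_rev]
      have h2 := unit_diff_aux (Φ (x:H)) (Φ (v:H)) (3 * σ / 4) hm hΦx hΦv
      have h3 : ‖Φ (x:H) - Φ (v:H)‖ ≤ θ * ‖(x:H) - (v:H)‖ :=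
        hlipΦ _ (hball hx) _ (hball hv)
      have hcoe : ((2/3 : NNReal) : ℝ) = 2/3 := by norm_num
      rw [h1, hcoe]
      have hnn : (0:ℝ) ≤ ‖(x:H) - (v:H)‖ := norm_nonneg _
      have hC : (0:ℝ) ≤ 2 / (3 * σ / 4) := by positivity
      have hkey : r * (2 / (3 * σ / 4) * θ) ≤ 2/3 := by
        have heq : r * (2 / (3 * σ / 4) * θ) = 8 * r * θ / (3 * σ) := by
          field_simp; ring
        rw [heq, div_le_div_iff₀ (by positivity) (by norm_num)]
        nlinarith
      calc r * ‖‖Φ (x:H)‖⁻¹ • Φ (x:H) - ‖Φ (v:H)‖⁻¹ • Φ (v:H)‖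
          ≤ r * (2 / (3 * σ / 4) * ‖Φ (x:H) - Φ (v:H)‖) :=
            mul_le_mul_of_nonneg_left h2 hr.le
        _ ≤ r * (2 / (3 * σ / 4) * (θ * ‖(x:H) - (v:H)‖)) :=
            mul_le_mul_of_nonneg_left (mul_le_mul_of_nonneg_left h3 hC) hr.le
        _ = (r * (2 / (3 * σ / 4) * θ)) * ‖(x:H) - (v:H)‖ := by ring
        _ ≤ 2/3 * ‖(x:H) - (v:H)‖ := mul_le_mul_of_nonneg_right hkey hnn
    exact ⟨(ContractingWith.fixedPoint T hcontr).1,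
      (ContractingWith.fixedPoint T hcontr).2,
      congrArg Subtype.val hcontr.fixedPoint_isFixedPt⟩
  obtain ⟨xs, hxsball, hfixv⟩ := hexists
  have hΦxs : Φ xs ≠ 0 := hne _ hxsball
  have hnxs : 0 < ‖Φ xs‖ := norm_pos_iff.mpr hΦxs
  have hxsnorm : ‖xs‖ = r := by
    rw [← hfixv, norm_neg, norm_smul, norm_smul, norm_inv, norm_norm,
      inv_mul_cancel₀ hnxs.ne', mul_one, Real.norm_eq_abs, abs_of_pos hr]
  -- Φ xs = -(‖Φ xs‖/r) • xs
  have hΦeq : Φ xs = (-(‖Φ xs‖ / r)) • xs := by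
    have h := congrArg (fun z : H => (-(‖Φ xs‖ / r)) • z) hfixv
    simp only [smul_neg, smul_smul] at h
    rw [← h]
    have hs : -(‖Φ xs‖ / r) * (r * ‖Φ xs‖⁻¹) = -1 := by
      field_simp
    rw [hs]
    simp
  set c : ℝ := ‖Φ xs‖ / r with hc
  have hcpos : 0 < c := div_pos hnxs hr
  have hc3θ : 3 * θ ≤ c := by
    have h1 : 3 * σ / 4 ≤ ‖Φ xs‖ := hlow _ hxsball
    rw [hc, le_div_iff₀ hr]
    nlinarith
  -- the main inequality
  have hmain : ∀ x ∈ closedBall (0:H) r, x ≠ xs →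
      max (inner ℝ (Φ xs) (xs - x) : ℝ) (inner ℝ (Φ x) (xs - x)) < 0 := by
    intro x hx hxne
    have hxr : ‖x‖ ≤ r := by simpa [mem_closedBall, dist_eq_norm] using hx
    set d : ℝ := r^2 - inner ℝ xs x with hd
    have hsq : ‖x - xs‖^2 = ‖x‖^2 - 2 * inner ℝ xs x + r^2 := by
      rw [norm_sub_sq_real x xs, real_inner_comm x xs, hxsnorm]
    have hdpos : 0 < d := by
      by_contra hdle
      push_neg at hdle
      have h3 : r^2 ≤ (inner ℝ xs x : ℝ) := by
        rw [hd] at hdle; linarith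
      have hx2 : ‖x‖^2 ≤ r^2 := by nlinarith [norm_nonneg x]
      have h4 : ‖x - xs‖^2 ≤ 0 := by rw [hsq]; linarith
      have h5 : ‖x - xs‖ = 0 := by nlinarith [sq_nonneg ‖x - xs‖, norm_nonneg (x - xs)]
      have h6 := norm_eq_zero.mp h5
      rw [sub_eq_zero] at h6
      exact hxne h6
    have hsq2 : ‖x - xs‖^2 ≤ 2 * d := by
      rw [hsq, hd]; nlinarith [norm_nonneg x]
    have hinner1 : (inner ℝ (Φ xs) (xs - x) : ℝ) = -c * d := by
      rw [hΦeq, real_inner_smul_left, inner_sub_right, real_inner_self_eq_norm_sq,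
        hxsnorm, hd]
    have ha : (inner ℝ (Φ xs) (xs - x) : ℝ) < 0 := by
      rw [hinner1]; nlinarith
    have hb : (inner ℝ (Φ x) (xs - x) : ℝ) < 0 := by
      have hsplit : (inner ℝ (Φ x) (xs - x) : ℝ) =
          inner ℝ (Φ xs) (xs - x) + inner ℝ (Φ x - Φ xs) (xs - x) := by
        rw [← inner_add_left]
        congr 1
        abel
      have hCS : (inner ℝ (Φ x - Φ xs) (xs - x) : ℝ) ≤ ‖Φ x - Φ xs‖ * ‖xs - x‖ :=
        real_inner_le_norm _ _
      have hlipx : ‖Φ x - Φ xs‖ ≤ θ * ‖x - xs‖ := hlipΦ _ (hball hx) _ (hball hxsball)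
      have hns : ‖xs - x‖ = ‖x - xs‖ := norm_sub_rev _ _
      have hnn2 : (0:ℝ) ≤ ‖x - xs‖ := norm_nonneg _
      have hinner2 : (inner ℝ (Φ x - Φ xs) (xs - x) : ℝ) ≤ θ * ‖x - xs‖^2 := by
        rw [hns] at hCS
        nlinarith
      rw [hsplit, hinner1]
      nlinarith
    exact max_lt ha hb
  refine ⟨xs, ⟨mem_sphere_zero_iff_norm.mpr hxsnorm, hmain⟩, ?_⟩
  -- uniqueness
  rintro y ⟨hysph, hyprop⟩
  by_contra hne'
  have hyr : ‖y‖ = r := mem_sphere_zero_iff_norm.mp hysph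
  have hyball : y ∈ closedBall (0:H) r := by
    simp [mem_closedBall, dist_eq_norm, hyr]
  have hxsball' : xs ∈ closedBall (0:H) r := hxsball
  have h1 := hmain y hyball hne'
  have h2 := hyprop xs hxsball' (fun h => hne' h.symm)
  have h3 : (inner ℝ (Φ xs) (xs - y) : ℝ) < 0 := lt_of_le_of_lt (le_max_left _ _) h1
  have h4 : (inner ℝ (Φ xs) (y - xs) : ℝ) < 0 := lt_of_le_of_lt (le_max_right _ _) h2
  have h5 : (inner ℝ (Φ xs) (y - xs) : ℝ) = -(inner ℝ (Φ xs) (xs - y) : ℝ) := by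
    rw [← inner_neg_right, neg_sub]
  linarith [h5 ▸ h4]
end

section
/- Let H be a real Hilbert space, ρ > 0, and Φ : B_ρ → H a C¹ function with Lipschitz derivative. Then the following are equivalent: (i) for every sufficiently small r > 0 there exists a unique x* ∈ S_r with max{⟨Φ(x*), x* − x⟩, ⟨Φ(x), x* − x⟩} < 0 for all x ∈ B_r \ {x*}; (ii) Φ(0) ≠ 0. -/
open Metric

set_option maxHeartbeats 1000000

private lemma unit_sub_unit_norm_le {H : Type*} [NormedAddCommGroup H] [NormedSpace ℝ H]
    (a b : H) (ha : a ≠ 0) (hb : b ≠ 0) :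
    ‖‖a‖⁻¹ • a - ‖b‖⁻¹ • b‖ ≤ 2 * ‖a - b‖ / ‖a‖ := by
  have ha' : (0:ℝ) < ‖a‖ := norm_pos_iff.2 ha
  have hb' : (0:ℝ) < ‖b‖ := norm_pos_iff.2 hb
  have key : ‖a‖⁻¹ • a - ‖b‖⁻¹ • b = ‖a‖⁻¹ • (a - b) + (‖a‖⁻¹ - ‖b‖⁻¹) • b := by
    rw [smul_sub, sub_smul]; abel
  have h2 : |‖a‖⁻¹ - ‖b‖⁻¹| * ‖b‖ ≤ ‖a - b‖ / ‖a‖ := by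
    have : ‖a‖⁻¹ - ‖b‖⁻¹ = (‖b‖ - ‖a‖) / (‖a‖ * ‖b‖) := by field_simp
    rw [this, abs_div, abs_of_pos (mul_pos ha' hb'), div_mul_eq_mul_div]
    rw [div_le_div_iff₀ (mul_pos ha' hb') ha']
    have h3 : |‖b‖ - ‖a‖| ≤ ‖a - b‖ := by
      rw [abs_sub_comm]
      exact (abs_norm_sub_norm_le a b).trans (le_of_eq rfl)
    nlinarith [mul_le_mul_of_nonneg_right h3 (mul_nonneg ha'.le hb'.le),
      abs_nonneg (‖b‖ - ‖a‖), norm_nonneg (a - b)]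
  calc ‖‖a‖⁻¹ • a - ‖b‖⁻¹ • b‖
      ≤ ‖‖a‖⁻¹ • (a - b)‖ + ‖(‖a‖⁻¹ - ‖b‖⁻¹) • b‖ := by rw [key]; exact norm_add_le _ _
    _ = ‖a - b‖ / ‖a‖ + |‖a‖⁻¹ - ‖b‖⁻¹| * ‖b‖ := by
        rw [norm_smul, norm_smul, Real.norm_eq_abs, Real.norm_eq_abs,
          abs_of_pos (inv_pos.2 ha'), inv_mul_eq_div]
    _ ≤ ‖a - b‖ / ‖a‖ + ‖a - b‖ / ‖a‖ := by linarith
    _ = 2 * ‖a - b‖ / ‖a‖ := by ring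

theorem stmt8 {H : Type*} [NormedAddCommGroup H] [InnerProductSpace ℝ H] [CompleteSpace H]
    (ρ γ : ℝ) (hρ : 0 < ρ) (hγ : 0 ≤ γ)
    (Φ : H → H) (Φ' : H → H →L[ℝ] H)
    (hdiff : ∀ x ∈ closedBall (0 : H) ρ, HasFDerivAt Φ (Φ' x) x)
    (hlip : ∀ x ∈ closedBall (0 : H) ρ, ∀ v ∈ closedBall (0 : H) ρ,
      ‖Φ' x - Φ' v‖ ≤ γ * ‖x - v‖) :
    (∃ ε > 0, ∀ r : ℝ, 0 < r → r ≤ ε →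
      ∃! xs : H, xs ∈ sphere (0 : H) r ∧
        ∀ x ∈ closedBall (0 : H) r, x ≠ xs →
          max (inner ℝ (Φ xs) (xs - x) : ℝ) (inner ℝ (Φ x) (xs - x)) < 0)
    ↔ Φ 0 ≠ 0 := by
  constructor
  · rintro ⟨ε, hε, hall⟩ h0
    have hr : 0 < min ε ρ := lt_min hε hρ
    obtain ⟨xs, ⟨hxs, hcond⟩, -⟩ := hall (min ε ρ) hr (min_le_left _ _)
    have hxsn : ‖xs‖ = min ε ρ := mem_sphere_zero_iff_norm.1 hxs
    have hne : (0:H) ≠ xs := by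
      intro h
      rw [← h] at hxsn
      simp only [norm_zero] at hxsn
      exact hr.ne hxsn
    have h := hcond 0 (mem_closedBall_self hr.le) hne
    rw [h0] at h
    simp only [inner_zero_left] at h
    exact absurd ((le_max_right _ _).trans_lt h) (lt_irrefl 0)
  · intro hΦ0
    set c := ‖Φ 0‖ with hc
    have hc0 : 0 < c := norm_pos_iff.2 hΦ0
    set L := ‖Φ' 0‖ + γ * ρ with hLdef
    have hL0 : 0 ≤ L := add_nonneg (norm_nonneg _) (mul_nonneg hγ hρ.le)
    clear_value c L
    have h0mem : (0:H) ∈ closedBall (0:H) ρ := mem_closedBall_self hρ.le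
    have hder : ∀ x ∈ closedBall (0:H) ρ, ‖Φ' x‖ ≤ L := by
      intro x hx
      have h1 := hlip x hx 0 h0mem
      have h2 : ‖x‖ ≤ ρ := mem_closedBall_zero_iff.1 hx
      have h3 : ‖Φ' x‖ - ‖Φ' 0‖ ≤ ‖Φ' x - Φ' 0‖ := norm_sub_norm_le _ _
      have h4 : γ * ‖x - 0‖ ≤ γ * ρ := by
        rw [sub_zero]; exact mul_le_mul_of_nonneg_left h2 hγ
      rw [hLdef]; linarith
    have hΦlip : ∀ x ∈ closedBall (0:H) ρ, ∀ y ∈ closedBall (0:H) ρ,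
        ‖Φ x - Φ y‖ ≤ L * ‖x - y‖ := by
      intro x hx y hy
      exact Convex.norm_image_sub_le_of_norm_hasFDerivWithin_le
        (fun z hz => (hdiff z hz).hasFDerivWithinAt) hder (convex_closedBall _ _) hy hx
    refine ⟨min ρ (c / (5 * (L + 1))), lt_min hρ (by positivity), ?_⟩
    intro r hr hrε
    have hrρ : r ≤ ρ := hrε.trans (min_le_left _ _)
    have hrc : r ≤ c / (5 * (L + 1)) := hrε.trans (min_le_right _ _)
    have hsub : closedBall (0:H) r ⊆ closedBall (0:H) ρ := closedBall_subset_closedBall hrρ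
    have hLr : L * r ≤ c / 5 := by
      have h1 : L * r ≤ L * (c / (5 * (L + 1))) := mul_le_mul_of_nonneg_left hrc hL0
      have h2 : L * (c / (5 * (L + 1))) ≤ c / 5 := by
        rw [← mul_div_assoc, div_le_div_iff₀ (by positivity) (by norm_num : (0:ℝ) < 5)]
        nlinarith
      linarith
    have hlow : ∀ x ∈ closedBall (0:H) r, 4 * c / 5 ≤ ‖Φ x‖ := by
      intro x hx
      have hd := hΦlip x (hsub hx) 0 h0mem
      have hxr : ‖x‖ ≤ r := mem_closedBall_zero_iff.1 hx
      have h1 : ‖Φ x - Φ 0‖ ≤ L * r := by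
        rw [sub_zero] at hd
        exact hd.trans (mul_le_mul_of_nonneg_left hxr hL0)
      have h2 : ‖Φ 0‖ - ‖Φ x‖ ≤ ‖Φ 0 - Φ x‖ := norm_sub_norm_le _ _
      rw [norm_sub_rev] at h2
      rw [← hc] at h2
      have h4 := h2.trans (h1.trans hLr)
      linarith
    have hΦne : ∀ x ∈ closedBall (0:H) r, Φ x ≠ 0 := by
      intro x hx h
      have := hlow x hx
      rw [h, norm_zero] at this
      linarith
    have hΦpos : ∀ x ∈ closedBall (0:H) r, 0 < ‖Φ x‖ := by
      intro x hx; exact norm_pos_iff.2 (hΦne x hx)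
    -- the map
    set T : H → H := fun x => -((r / ‖Φ x‖) • Φ x) with hTdef
    have hTnorm : ∀ x ∈ closedBall (0:H) r, ‖T x‖ = r := by
      intro x hx
      rw [hTdef]
      simp only [norm_neg, norm_smul, Real.norm_eq_abs,
        abs_of_pos (div_pos hr (hΦpos x hx))]
      exact div_mul_cancel₀ r (hΦpos x hx).ne'
    have hTmem : ∀ x ∈ closedBall (0:H) r, T x ∈ closedBall (0:H) r := by
      intro x hx
      rw [mem_closedBall_zero_iff, hTnorm x hx]
    have hTcontr : ∀ x ∈ closedBall (0:H) r, ∀ y ∈ closedBall (0:H) r,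
        ‖T x - T y‖ ≤ (1/2) * ‖x - y‖ := by
      intro x hx y hy
      have e : ∀ z : H, (r / ‖z‖) • z = r • (‖z‖⁻¹ • z) := fun z => by
        rw [div_eq_mul_inv, mul_smul]
      have hux : T x - T y = -(r • (‖Φ x‖⁻¹ • Φ x - ‖Φ y‖⁻¹ • Φ y)) := by
        show -((r / ‖Φ x‖) • Φ x) - -((r / ‖Φ y‖) • Φ y) = _
        rw [e, e, smul_sub]
        abel
      have h1 : ‖T x - T y‖ = r * ‖‖Φ x‖⁻¹ • Φ x - ‖Φ y‖⁻¹ • Φ y‖ := by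
        rw [hux, norm_neg, norm_smul, Real.norm_eq_abs, abs_of_pos hr]
      have h2 := unit_sub_unit_norm_le (Φ x) (Φ y) (hΦne x hx) (hΦne y hy)
      have h3 : ‖Φ x - Φ y‖ ≤ L * ‖x - y‖ := hΦlip x (hsub hx) y (hsub hy)
      have h4 : 2 * ‖Φ x - Φ y‖ / ‖Φ x‖ ≤ 2 * (L * ‖x - y‖) / (4 * c / 5) := by
        apply div_le_div₀ (by positivity) (by linarith) (by positivity) (hlow x hx)
      have h5 : r * (2 * (L * ‖x - y‖) / (4 * c / 5)) ≤ (1/2) * ‖x - y‖ := by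
        rw [← mul_div_assoc, div_le_iff₀ (by positivity : (0:ℝ) < 4 * c / 5)]
        nlinarith [mul_le_mul_of_nonneg_right hLr (norm_nonneg (x - y)),
          norm_nonneg (x - y), hc0.le]
      calc ‖T x - T y‖ = r * ‖‖Φ x‖⁻¹ • Φ x - ‖Φ y‖⁻¹ • Φ y‖ := h1
        _ ≤ r * (2 * ‖Φ x - Φ y‖ / ‖Φ x‖) := mul_le_mul_of_nonneg_left h2 hr.le
        _ ≤ r * (2 * (L * ‖x - y‖) / (4 * c / 5)) := by
            apply mul_le_mul_of_nonneg_left _ hr.le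
            exact h4
        _ ≤ (1/2) * ‖x - y‖ := h5
    have hTuniq : ∀ x ∈ closedBall (0:H) r, ∀ y ∈ closedBall (0:H) r,
        T x = x → T y = y → x = y := by
      intro x hx y hy hfx hfy
      have := hTcontr x hx y hy
      rw [hfx, hfy] at this
      have : ‖x - y‖ ≤ 0 := by linarith
      have := le_antisymm this (norm_nonneg _)
      rwa [norm_sub_eq_zero_iff] at this
    -- main property of fixed points
    have hmain : ∀ xs ∈ closedBall (0:H) r, T xs = xs →
        ∀ x ∈ closedBall (0:H) r, x ≠ xs →
          max (inner ℝ (Φ xs) (xs - x) : ℝ) (inner ℝ (Φ x) (xs - x)) < 0 := by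
      intro xs hxsmem hfix x hx hne
      set m : ℝ := ‖Φ xs‖ with hmdef
      clear_value m
      have hm : 4 * c / 5 ≤ m := by rw [hmdef]; exact hlow xs hxsmem
      have hm0 : 0 < m := by rw [hmdef]; exact hΦpos xs hxsmem
      have hrel : m • xs = (-r) • Φ xs := by
        conv_lhs => rw [← hfix]
        show m • -((r / ‖Φ xs‖) • Φ xs) = _
        rw [smul_neg, smul_smul]
        have hmm : m * (r / ‖Φ xs‖) = r := by rw [← hmdef]; field_simp
        rw [hmm, ← neg_smul]
      set P : ℝ := inner ℝ (Φ xs) x with hPdef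
      clear_value P
      have hxsnorm : ‖xs‖ = r := by rw [← hfix]; exact hTnorm xs hxsmem
      have hxnorm : ‖x‖ ≤ r := mem_closedBall_zero_iff.1 hx
      have hip1 : m * (inner ℝ x xs : ℝ) = -r * P := by
        have := congrArg (fun z => (inner ℝ x z : ℝ)) hrel
        simp only [real_inner_smul_right] at this
        rw [this, hPdef, real_inner_comm]
      have hip2 : (inner ℝ (Φ xs) xs : ℝ) = -(r * m) := by
        have h := congrArg (fun z => (inner ℝ (Φ xs) z : ℝ)) hrel
        simp only [real_inner_smul_right] at h
        rw [real_inner_self_eq_norm_mul_norm, ← hmdef] at h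
        have h2 : m * (inner ℝ (Φ xs) xs : ℝ) = m * (-(r * m)) := by rw [h]; ring
        exact mul_left_cancel₀ hm0.ne' h2
      have hA : m * ‖x - xs‖^2 = m * ‖x‖^2 + 2 * (r * P) + m * r^2 := by
        have hexp : ‖x - xs‖^2 = ‖x‖^2 - 2 * (inner ℝ x xs : ℝ) + ‖xs‖^2 :=
          norm_sub_sq_real x xs
        rw [hexp, hxsnorm]
        have : m * (‖x‖ ^ 2 - 2 * (inner ℝ x xs : ℝ) + r ^ 2)
            = m * ‖x‖^2 - 2 * (m * (inner ℝ x xs : ℝ)) + m * r^2 := by ring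
        rw [this, hip1]
        ring
      have hI1 : (inner ℝ (Φ xs) (xs - x) : ℝ) = -(r * m) - P := by
        rw [inner_sub_right, hip2, hPdef]
      have hxxs : 0 < ‖x - xs‖ := by
        rw [norm_pos_iff, sub_ne_zero]; exact hne
      have hkey1 : 2 * r * (inner ℝ (Φ xs) (xs - x) : ℝ) ≤ -(m * ‖x - xs‖^2) := by
        rw [hI1]
        have hsq : ‖x‖ * ‖x‖ ≤ r * r := mul_self_le_mul_self (norm_nonneg x) hxnorm
        have hsq' : m * (‖x‖ * ‖x‖) ≤ m * (r * r) :=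
          mul_le_mul_of_nonneg_left hsq hm0.le
        nlinarith [hA, hsq']
      have hfst : (inner ℝ (Φ xs) (xs - x) : ℝ) < 0 := by
        by_contra hcon
        push_neg at hcon
        linarith [mul_nonneg hr.le hcon, mul_pos hm0 (mul_pos hxxs hxxs), hkey1]
      have hsnd : (inner ℝ (Φ x) (xs - x) : ℝ) < 0 := by
        have hsplit : (inner ℝ (Φ x) (xs - x) : ℝ)
            = (inner ℝ (Φ xs) (xs - x) : ℝ) + (inner ℝ (Φ x - Φ xs) (xs - x) : ℝ) := by
          rw [← inner_add_left]; congr 1; abel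
        have hcs : (inner ℝ (Φ x - Φ xs) (xs - x) : ℝ) ≤ ‖Φ x - Φ xs‖ * ‖xs - x‖ :=
          real_inner_le_norm _ _
        have hlipxy : ‖Φ x - Φ xs‖ ≤ L * ‖x - xs‖ := hΦlip x (hsub hx) xs (hsub hxsmem)
        have hns : ‖xs - x‖ = ‖x - xs‖ := norm_sub_rev _ _
        have h2 : (inner ℝ (Φ x - Φ xs) (xs - x) : ℝ) ≤ L * ‖x - xs‖^2 := by
          rw [hns] at hcs
          calc (inner ℝ (Φ x - Φ xs) (xs - x) : ℝ) ≤ ‖Φ x - Φ xs‖ * ‖x - xs‖ := hcs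
            _ ≤ L * ‖x - xs‖ * ‖x - xs‖ :=
                mul_le_mul_of_nonneg_right hlipxy (norm_nonneg _)
            _ = L * ‖x - xs‖^2 := by ring
        -- 2 r L < m since 2 L r ≤ 2c/5 < 4c/5 ≤ m
        have hmL : 2 * r * L < m := by
          have h6 : 2 * (L * r) ≤ 2 * (c / 5) := by linarith
          linarith
        have hkey2 : 2 * r * (inner ℝ (Φ x) (xs - x) : ℝ)
            ≤ -(m * ‖x - xs‖^2) + 2 * r * (L * ‖x - xs‖^2) := by
          rw [hsplit]
          have h7 : 2 * r * (inner ℝ (Φ x - Φ xs) (xs - x) : ℝ) ≤ 2 * r * (L * ‖x - xs‖^2) :=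
            mul_le_mul_of_nonneg_left h2 (by positivity)
          linarith [hkey1, h7]
        by_contra hcon
        push_neg at hcon
        nlinarith [mul_nonneg hr.le hcon, mul_pos (sub_pos.2 hmL) (mul_pos hxxs hxxs), hkey2]
      exact max_lt hfst hsnd
    -- converse: any xs satisfying the conditions is a fixed point of T
    have hconv : ∀ xs, xs ∈ sphere (0:H) r →
        (∀ x ∈ closedBall (0:H) r, x ≠ xs →
          max (inner ℝ (Φ xs) (xs - x) : ℝ) (inner ℝ (Φ x) (xs - x)) < 0) →
        T xs = xs := by
      intro xs hxs hcond
      by_contra hne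
      have hxsmem : xs ∈ closedBall (0:H) r := sphere_subset_closedBall hxs
      have hTm := hTmem xs hxsmem
      have h := hcond (T xs) hTm hne
      have h1 : (inner ℝ (Φ xs) (xs - T xs) : ℝ) < 0 := (le_max_left _ _).trans_lt h
      set m : ℝ := ‖Φ xs‖ with hmdef
      clear_value m
      have hm0 : 0 < m := by rw [hmdef]; exact hΦpos xs hxsmem
      have hipT : (inner ℝ (Φ xs) (T xs) : ℝ) = -(r * m) := by
        rw [hTdef]
        simp only [inner_neg_right, real_inner_smul_right]
        rw [real_inner_self_eq_norm_mul_norm, ← hmdef]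
        field_simp
      have hxsn : ‖xs‖ = r := mem_sphere_zero_iff_norm.1 hxs
      have hCS : -(r * m) ≤ (inner ℝ (Φ xs) xs : ℝ) := by
        have := real_inner_le_norm (Φ xs) (-xs)
        rw [inner_neg_right, norm_neg, hxsn, ← hmdef] at this
        linarith [this]
      have : (inner ℝ (Φ xs) (xs - T xs) : ℝ) = (inner ℝ (Φ xs) xs : ℝ) + (r * m) := by
        rw [inner_sub_right, hipT]; ring
      linarith
    -- existence of fixed point via Banach
    haveI : Nonempty (closedBall (0:H) r) := ⟨⟨0, mem_closedBall_self hr.le⟩⟩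
    haveI : CompleteSpace (closedBall (0:H) r) :=
      (isClosed_closedBall (x := (0:H)) (ε := r)).completeSpace_coe
    set T' : closedBall (0:H) r → closedBall (0:H) r :=
      fun x => ⟨T x.1, hTmem x.1 x.2⟩ with hT'def
    have hcontr : ContractingWith (1/2 : NNReal) T' := by
      constructor
      · rw [← NNReal.coe_lt_coe]; norm_num
      · apply LipschitzWith.of_dist_le_mul
        intro x y
        rw [Subtype.dist_eq, dist_eq_norm, Subtype.dist_eq, dist_eq_norm]
        have := hTcontr x.1 x.2 y.1 y.2
        calc ‖(T' x).1 - (T' y).1‖ = ‖T x.1 - T y.1‖ := rfl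
          _ ≤ (1/2) * ‖x.1 - y.1‖ := this
          _ = ((1/2 : NNReal) : ℝ) * ‖x.1 - y.1‖ := by norm_num
    obtain ⟨p, hpmem, hpfix⟩ : ∃ p ∈ closedBall (0:H) r, T p = p := by
      refine ⟨Subtype.val (ContractingWith.fixedPoint T' hcontr),
        Subtype.prop (ContractingWith.fixedPoint T' hcontr), ?_⟩
      exact congrArg Subtype.val (ContractingWith.fixedPoint_isFixedPt hcontr)
    -- assemble
    refine ⟨p, ⟨?_, hmain p hpmem hpfix⟩, ?_⟩
    · rw [mem_sphere_zero_iff_norm, ← hpfix]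
      exact hTnorm p hpmem
    · rintro y ⟨hy1, hy2⟩
      exact hTuniq y (sphere_subset_closedBall hy1) p hpmem (hconv y hy1 hy2) hpfix
end

section
/- Let H be a real Hilbert space, r > 0, and f : B_r → H. Suppose x* ∈ S_r and y* ∈ B_r satisfy ‖x* − f(x*)‖² + ‖f(x) − y*‖² − ‖x − f(x)‖² < ‖f(x*) − y*‖² = (dist(f(x*), B_r))² for all x ∈ B_r \ {x*}. Then y* = x*, and consequently ‖f(x*) − x*‖ = dist(f(x*), B_r) and ‖f(x) − x*‖ < ‖f(x) − x‖ for all x ∈ B_r \ {x*}. -/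
open Metric

theorem stmt13 {H : Type*} [NormedAddCommGroup H] [InnerProductSpace ℝ H]
    (r : ℝ) (hr : 0 < r) (f : H → H)
    (xs ys : H) (hxs : xs ∈ sphere (0 : H) r) (hys : ys ∈ closedBall (0 : H) r)
    (h1 : ∀ x ∈ closedBall (0 : H) r, x ≠ xs →
      ‖xs - f xs‖ ^ 2 + ‖f x - ys‖ ^ 2 - ‖x - f x‖ ^ 2 < ‖f xs - ys‖ ^ 2)
    (h2 : ‖f xs - ys‖ ^ 2 = (infDist (f xs) (closedBall (0 : H) r)) ^ 2) :
    ys = xs ∧ ‖f xs - xs‖ = infDist (f xs) (closedBall (0 : H) r) ∧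
      ∀ x ∈ closedBall (0 : H) r, x ≠ xs → ‖f x - xs‖ < ‖f x - x‖ := by
  have hxsB : xs ∈ closedBall (0 : H) r := sphere_subset_closedBall hxs
  -- infDist equality without squares
  have hinf : ‖f xs - ys‖ = infDist (f xs) (closedBall (0 : H) r) := by
    have h0 : (0:ℝ) ≤ infDist (f xs) (closedBall (0 : H) r) := infDist_nonneg
    nlinarith [norm_nonneg (f xs - ys), sq_nonneg (‖f xs - ys‖ - infDist (f xs) (closedBall (0 : H) r))]
  have hle : infDist (f xs) (closedBall (0 : H) r) ≤ ‖f xs - xs‖ := by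
    have := infDist_le_dist_of_mem (x := f xs) hxsB
    simpa [dist_eq_norm] using this
  have hyx : ys = xs := by
    by_contra hne
    have := h1 ys hys hne
    have hrw : ‖xs - f xs‖ = ‖f xs - xs‖ := norm_sub_rev _ _
    have hle2 : ‖f xs - ys‖ ≤ ‖f xs - xs‖ := hinf ▸ hle
    have hrw2 : ‖ys - f ys‖ = ‖f ys - ys‖ := norm_sub_rev _ _
    rw [hrw, hrw2] at this
    nlinarith [mul_self_le_mul_self (norm_nonneg (f xs - ys)) hle2]
  rw [hyx] at hinf h1
  refine ⟨hyx, hinf, ?_⟩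
  intro x hx hne
  have := h1 x hx hne
  have hrw : ‖x - f x‖ = ‖f x - x‖ := norm_sub_rev _ _
  have hrw2 : ‖xs - f xs‖ = ‖f xs - xs‖ := norm_sub_rev _ _
  rw [hrw, hrw2] at this
  nlinarith [norm_nonneg (f x - xs), norm_nonneg (f x - x)]
end

section
/- Let H be a real Hilbert space, ρ > 0, and f : B_ρ → H a C¹ function with derivative Lipschitz with constant γ. Define η, θ, L := 2(η + θ + 2γρ) as before and assume σ := inf_{y ∈ B_ρ} sup_{‖u‖=1} |⟨f'(0)(u), y⟩ − ⟨f(0), u⟩| > 0. Then for each r ∈ ]0, min{ρ, σ/L}] there exists a unique x* ∈ S_r such that ‖f(x*) − x*‖ = dist(f(x*), B_r) and ‖f(x) − x*‖ < ‖f(x) − x‖ for all x ∈ B_r \ {x*}. -/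
open Metric

lemma dw_aux {H : Type*} [NormedAddCommGroup H] [InnerProductSpace ℝ H]
    (z w : H) (m r : ℝ) (hm : 0 < m) (hz : m ≤ ‖z‖) (hw : m ≤ ‖w‖) (hr : 0 ≤ r) :
    ‖(r * ‖z‖⁻¹) • z - (r * ‖w‖⁻¹) • w‖ ≤ r / m * ‖z - w‖ := by
  have ha : 0 < ‖z‖ := lt_of_lt_of_le hm hz
  have hb : 0 < ‖w‖ := lt_of_lt_of_le hm hw
  have hcs : (inner ℝ z w : ℝ) ≤ ‖z‖ * ‖w‖ := real_inner_le_norm z w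
  have hm2 : m * m ≤ ‖z‖ * ‖w‖ := mul_le_mul hz hw hm.le (norm_nonneg _)
  have h1 : ‖(r * ‖z‖⁻¹) • z - (r * ‖w‖⁻¹) • w‖ ^ 2
      = (r * ‖z‖⁻¹) ^ 2 * ‖z‖ ^ 2 - 2 * ((r * ‖z‖⁻¹) * (r * ‖w‖⁻¹) * (inner ℝ z w : ℝ))
        + (r * ‖w‖⁻¹) ^ 2 * ‖w‖ ^ 2 := by
    rw [norm_sub_sq_real, real_inner_smul_left, real_inner_smul_right,
      norm_smul, norm_smul]
    simp only [Real.norm_eq_abs, abs_mul, abs_of_nonneg hr, abs_of_nonneg (inv_nonneg.2 ha.le),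
      abs_of_nonneg (inv_nonneg.2 hb.le), mul_pow]
    ring
  have h2 : ‖z - w‖ ^ 2 = ‖z‖ ^ 2 - 2 * (inner ℝ z w : ℝ) + ‖w‖ ^ 2 := norm_sub_sq_real z w
  have key : ‖(r * ‖z‖⁻¹) • z - (r * ‖w‖⁻¹) • w‖ ^ 2 ≤ (r / m * ‖z - w‖) ^ 2 := by
    rw [h1, mul_pow (r/m), div_pow, h2, div_mul_eq_mul_div, le_div_iff₀ (pow_pos hm 2)]
    have hA : ‖z‖ ≠ 0 := ha.ne'
    have hB : ‖w‖ ≠ 0 := hb.ne'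
    field_simp
    nlinarith [mul_nonneg (mul_nonneg (sq_nonneg r) (sq_nonneg (‖z‖ - ‖w‖)))
        (mul_pos ha hb).le,
      mul_nonneg (mul_nonneg (sq_nonneg r) (sub_nonneg.2 hcs)) (sub_nonneg.2 hm2),
      mul_pos ha hb, sq_nonneg r, hm.le]
  have h0 : 0 ≤ r / m * ‖z - w‖ := by positivity
  calc ‖(r * ‖z‖⁻¹) • z - (r * ‖w‖⁻¹) • w‖
      = Real.sqrt (‖(r * ‖z‖⁻¹) • z - (r * ‖w‖⁻¹) • w‖ ^ 2) := by
        rw [Real.sqrt_sq (norm_nonneg _)]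
    _ ≤ Real.sqrt ((r / m * ‖z - w‖) ^ 2) := Real.sqrt_le_sqrt key
    _ = r / m * ‖z - w‖ := Real.sqrt_sq h0

set_option maxHeartbeats 2000000 in
theorem stmt15 {H : Type*} [NormedAddCommGroup H] [InnerProductSpace ℝ H] [CompleteSpace H]
    (ρ γ : ℝ) (hρ : 0 < ρ) (hγ : 0 ≤ γ)
    (f : H → H) (f' : H → H →L[ℝ] H)
    (hdiff : ∀ x ∈ closedBall (0 : H) ρ, HasFDerivAt f (f' x) x)
    (hlip : ∀ x ∈ closedBall (0 : H) ρ, ∀ v ∈ closedBall (0 : H) ρ,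
      ‖f' x - f' v‖ ≤ γ * ‖x - v‖)
    (η θ L σ : ℝ)
    (hη : ∀ x ∈ closedBall (0 : H) ρ, ∀ v ∈ closedBall (0 : H) ρ,
      ‖(x - f x) - (v - f v)‖ ≤ η * ‖x - v‖)
    (hθ : θ = sSup ((fun x => ‖f' x‖) '' closedBall (0 : H) ρ))
    (hL : L = 2 * (η + θ + 2 * γ * ρ))
    (hσ : σ = sInf ((fun y => sSup ((fun u => |(inner ℝ (f' 0 u) y : ℝ) - inner ℝ (f 0) u|) ''
      sphere (0 : H) 1)) '' closedBall (0 : H) ρ))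
    (hσpos : 0 < σ) :
    ∀ r : ℝ, 0 < r → r ≤ min ρ (σ / L) →
      ∃! xs : H, xs ∈ sphere (0 : H) r ∧
        ‖f xs - xs‖ = infDist (f xs) (closedBall (0 : H) r) ∧
        ∀ x ∈ closedBall (0 : H) r, x ≠ xs → ‖f x - xs‖ < ‖f x - x‖ := by
  intro r hr hrm
  have hrρ : r ≤ ρ := le_trans hrm (min_le_left _ _)
  have hrσL : r ≤ σ / L := le_trans hrm (min_le_right _ _)
  have h0ρ : (0 : H) ∈ closedBall (0 : H) ρ := mem_closedBall_self hρ.le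
  -- H is nontrivial
  have hnt : Nontrivial H := by
    by_contra hns
    rw [not_nontrivial_iff_subsingleton] at hns
    have h1 : sphere (0 : H) 1 = ∅ := by
      ext x
      simp only [mem_sphere_zero_iff_norm, Set.mem_empty_iff_false, iff_false]
      rw [Subsingleton.elim x 0, norm_zero]
      norm_num
    have h2 : closedBall (0 : H) ρ = {0} := by
      ext x
      simp only [mem_closedBall_zero_iff, Set.mem_singleton_iff]
      constructor
      · intro _; exact Subsingleton.elim x 0
      · intro h; rw [h, norm_zero]; exact hρ.le
    rw [h2, Set.image_singleton, h1, Set.image_empty, Real.sSup_empty, csInf_singleton] at hσ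
    linarith
  -- a unit vector
  obtain ⟨x₀, hx₀⟩ := exists_ne (0 : H)
  have hx₀n : ‖x₀‖ ≠ 0 := norm_ne_zero_iff.2 hx₀
  set e₀ : H := ‖x₀‖⁻¹ • x₀ with he₀def
  have he₀ : ‖e₀‖ = 1 := by
    rw [he₀def, norm_smul, Real.norm_eq_abs, abs_of_nonneg (inv_nonneg.2 (norm_nonneg _)),
      inv_mul_cancel₀ hx₀n]
  -- η ≥ 0
  have hη0 : 0 ≤ η := by
    have hmem : (ρ : ℝ) • e₀ ∈ closedBall (0 : H) ρ := by
      rw [mem_closedBall_zero_iff, norm_smul, Real.norm_eq_abs, abs_of_nonneg hρ.le, he₀, mul_one]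
    have h1 := hη (ρ • e₀) hmem 0 h0ρ
    have h2 : ‖ρ • e₀ - (0 : H)‖ = ρ := by
      rw [sub_zero, norm_smul, Real.norm_eq_abs, abs_of_nonneg hρ.le, he₀, mul_one]
    rw [h2] at h1
    have h5 : 0 ≤ η * ρ := le_trans (norm_nonneg _) h1
    exact (mul_nonneg_iff_of_pos_right hρ).1 h5
  obtain ⟨θ₀, hθ₀def⟩ : ∃ t : ℝ, t = ‖f' 0‖ := ⟨_, rfl⟩
  have hθ₀0 : 0 ≤ θ₀ := hθ₀def ▸ norm_nonneg _
  have hθub : ∀ x ∈ closedBall (0 : H) ρ, ‖f' x‖ ≤ θ₀ + γ * ρ := by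
    intro x hx
    have h1 := hlip x hx 0 h0ρ
    have h2 : ‖x - 0‖ ≤ ρ := by rw [sub_zero]; exact mem_closedBall_zero_iff.1 hx
    calc ‖f' x‖ ≤ ‖f' x - f' 0‖ + ‖f' 0‖ := by
          simpa using norm_add_le (f' x - f' 0) (f' 0)
      _ ≤ γ * ρ + θ₀ := add_le_add (le_trans h1 (mul_le_mul_of_nonneg_left h2 hγ))
          (le_of_eq hθ₀def.symm)
      _ = θ₀ + γ * ρ := by ring
  have hθ₀θ : θ₀ ≤ θ := by
    rw [hθ, hθ₀def]
    exact le_csSup ⟨θ₀ + γ * ρ, by rintro _ ⟨x, hx, rfl⟩; exact hθub x hx⟩ ⟨0, h0ρ, rfl⟩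
  -- ‖id - f' 0‖ ≤ η
  have hIop : ‖ContinuousLinearMap.id ℝ H - f' 0‖ ≤ η := by
    have hg : HasFDerivAt (fun x : H => x - f x) (ContinuousLinearMap.id ℝ H - f' 0) 0 :=
      (hasFDerivAt_id 0).sub (hdiff 0 h0ρ)
    refine hg.le_of_lip' hη0 ?_
    filter_upwards [closedBall_mem_nhds (0 : H) hρ] with x hx
    exact hη x hx 0 h0ρ
  -- L ≥ 2 > 0
  haveI := hnt
  have hid1 : (1 : ℝ) = ‖ContinuousLinearMap.id ℝ H‖ := ContinuousLinearMap.norm_id.symm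
  have h1ηθ : (1 : ℝ) ≤ η + θ₀ := by
    have : ‖ContinuousLinearMap.id ℝ H‖ ≤ ‖ContinuousLinearMap.id ℝ H - f' 0‖ + ‖f' 0‖ := by
      simpa using norm_add_le (ContinuousLinearMap.id ℝ H - f' 0) (f' 0)
    rw [← hid1] at this
    rw [hθ₀def]
    linarith
  have hLpos : 0 < L := by
    rw [hL]
    have := mul_nonneg hγ hρ.le
    linarith only [h1ηθ, hθ₀θ, this]
  have hσr : L * r ≤ σ := by
    have := (le_div_iff₀ hLpos).1 hrσL
    linarith
  have hσr' : 2 * η * r + 2 * θ * r + 4 * γ * ρ * r ≤ σ := by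
    have h : L * r = 2 * η * r + 2 * θ * r + 4 * γ * ρ * r := by rw [hL]; ring
    linarith
  -- the adjoint
  set A : H →L[ℝ] H := ContinuousLinearMap.adjoint (f' 0) with hAdef
  have hAinner : ∀ (y u : H), (inner ℝ (A y) u : ℝ) = inner ℝ (f' 0 u) y := by
    intro y u
    rw [ContinuousLinearMap.adjoint_inner_left, real_inner_comm]
  -- σ ≤ ‖A y - f 0‖ on the ball
  have hbdfun : ∀ y : H, ∀ s ∈ ((fun u => |(inner ℝ (f' 0 u) y : ℝ) - inner ℝ (f 0) u|) ''
      sphere (0 : H) 1), s ≤ ‖A y - f 0‖ := by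
    intro y
    rintro _ ⟨u, hu, rfl⟩
    have hu1 : ‖u‖ = 1 := mem_sphere_zero_iff_norm.1 hu
    have h1 : (inner ℝ (f' 0 u) y : ℝ) - inner ℝ (f 0) u = inner ℝ (A y - f 0) u := by
      rw [inner_sub_left, hAinner]
    show |(inner ℝ (f' 0 u) y : ℝ) - inner ℝ (f 0) u| ≤ ‖A y - f 0‖
    rw [h1]
    calc |(inner ℝ (A y - f 0) u : ℝ)| ≤ ‖A y - f 0‖ * ‖u‖ := abs_real_inner_le_norm _ _
      _ = ‖A y - f 0‖ := by rw [hu1, mul_one]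
  have hmemSy : ∀ y : H, |(inner ℝ (f' 0 e₀) y : ℝ) - inner ℝ (f 0) e₀| ∈
      ((fun u => |(inner ℝ (f' 0 u) y : ℝ) - inner ℝ (f 0) u|) '' sphere (0 : H) 1) :=
    fun y => ⟨e₀, mem_sphere_zero_iff_norm.2 he₀, rfl⟩
  have hSupnn : ∀ y : H, 0 ≤ sSup ((fun u => |(inner ℝ (f' 0 u) y : ℝ) - inner ℝ (f 0) u|) ''
      sphere (0 : H) 1) := fun y =>
    le_trans (abs_nonneg _) (le_csSup ⟨‖A y - f 0‖, hbdfun y⟩ (hmemSy y))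
  have hAy : ∀ y ∈ closedBall (0 : H) ρ, σ ≤ ‖A y - f 0‖ := by
    intro y hy
    have h2 : sSup ((fun u => |(inner ℝ (f' 0 u) y : ℝ) - inner ℝ (f 0) u|) '' sphere (0 : H) 1)
        ≤ ‖A y - f 0‖ := csSup_le ⟨_, hmemSy y⟩ (hbdfun y)
    have h3 : σ ≤ sSup ((fun u => |(inner ℝ (f' 0 u) y : ℝ) - inner ℝ (f 0) u|) ''
        sphere (0 : H) 1) := by
      rw [hσ]
      refine csInf_le ⟨0, ?_⟩ ⟨y, hy, rfl⟩
      rintro _ ⟨y', _, rfl⟩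
      exact hSupnn y'
    linarith
  -- projection of f 0 onto the closure of A '' B_ρ
  set K : Set H := closure (A '' closedBall (0 : H) ρ) with hKdef
  have hKconv : Convex ℝ K := ((convex_closedBall (0 : H) ρ).linear_image A.toLinearMap).closure
  have hKne : K.Nonempty := ⟨A 0, subset_closure ⟨0, h0ρ, rfl⟩⟩
  obtain ⟨p, hpK, hpmin⟩ :=
    exists_norm_eq_iInf_of_complete_convex hKne isClosed_closure.isComplete hKconv (f 0)
  have hVI : ∀ w ∈ K, (inner ℝ (f 0 - p) (w - p) : ℝ) ≤ 0 :=
    (norm_eq_iInf_iff_real_inner_le_zero hKconv hpK).1 hpmin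
  have hσp : σ ≤ ‖f 0 - p‖ := by
    have hsub : A '' closedBall (0 : H) ρ ⊆ {z : H | σ ≤ ‖f 0 - z‖} := by
      rintro _ ⟨y, hy, rfl⟩
      rw [Set.mem_setOf_eq, norm_sub_rev]
      exact hAy y hy
    have hcl : IsClosed {z : H | σ ≤ ‖f 0 - z‖} :=
      isClosed_le continuous_const (Continuous.norm (continuous_const.sub continuous_id))
    exact closure_minimal hsub hcl hpK
  have hfp0 : 0 < ‖f 0 - p‖ := lt_of_lt_of_le hσpos hσp
  set u₀ : H := ‖f 0 - p‖⁻¹ • (f 0 - p) with hu₀def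
  have hu₀ : ‖u₀‖ = 1 := by
    rw [hu₀def, norm_smul, Real.norm_eq_abs, abs_of_nonneg (inv_nonneg.2 hfp0.le),
      inv_mul_cancel₀ hfp0.ne']
  -- the key separation property
  have hkey : ∀ y ∈ closedBall (0 : H) ρ, σ ≤ (inner ℝ (f 0) u₀ : ℝ) - inner ℝ (f' 0 u₀) y := by
    intro y hy
    have h2 : (inner ℝ (f 0 - p) u₀ : ℝ) = ‖f 0 - p‖ := by
      rw [hu₀def, real_inner_smul_right, real_inner_self_eq_norm_mul_norm]
      field_simp
    have h3 : 0 ≤ (inner ℝ (p - A y) u₀ : ℝ) := by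
      have hAyK : A y ∈ K := subset_closure ⟨y, hy, rfl⟩
      have h4 := hVI (A y) hAyK
      rw [hu₀def, real_inner_smul_right]
      have h5 : (inner ℝ (p - A y) (f 0 - p) : ℝ) = -(inner ℝ (f 0 - p) (A y - p) : ℝ) := by
        rw [← neg_sub (A y) p, inner_neg_left, real_inner_comm]
      exact mul_nonneg (inv_nonneg.2 hfp0.le) (by rw [h5]; linarith)
    have h6 : (inner ℝ (f 0 - A y) u₀ : ℝ) = inner ℝ (f 0 - p) u₀ + inner ℝ (p - A y) u₀ := by
      rw [← inner_add_left, sub_add_sub_cancel]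
    have h7 : (inner ℝ (f 0 - A y) u₀ : ℝ) = (inner ℝ (f 0) u₀ : ℝ) - inner ℝ (f' 0 u₀) y := by
      rw [inner_sub_left, hAinner]
    linarith
  obtain ⟨k, hkdef⟩ : ∃ t : ℝ, t = ‖f' 0 u₀‖ := ⟨_, rfl⟩
  have hk0 : 0 ≤ k := hkdef ▸ norm_nonneg _
  obtain ⟨a, hadef⟩ : ∃ t : ℝ, t = (inner ℝ (f 0) u₀ : ℝ) := ⟨_, rfl⟩
  have hak : σ + ρ * k ≤ a := by
    rcases eq_or_ne (f' 0 u₀) 0 with h | h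
    · have := hkey 0 h0ρ
      rw [inner_zero_right] at this
      rw [hkdef, h, norm_zero]
      linarith
    · have hkpos : 0 < k := hkdef ▸ norm_pos_iff.2 h
      set y : H := (ρ * k⁻¹) • f' 0 u₀ with hydef
      have hymem : y ∈ closedBall (0 : H) ρ := by
        rw [mem_closedBall_zero_iff, hydef, norm_smul, Real.norm_eq_abs,
          abs_of_nonneg (mul_nonneg hρ.le (inv_nonneg.2 hk0)), ← hkdef]
        rw [mul_assoc, inv_mul_cancel₀ hkpos.ne', mul_one]
      have h1 := hkey y hymem
      have h2 : (inner ℝ (f' 0 u₀) y : ℝ) = ρ * k := by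
        rw [hydef, real_inner_smul_right, real_inner_self_eq_norm_mul_norm, ← hkdef]
        field_simp
      rw [h2] at h1
      linarith
  have hk1 : 1 - η ≤ k := by
    have h1 : ‖u₀ - f' 0 u₀‖ ≤ η := by
      have h2 : u₀ - f' 0 u₀ = (ContinuousLinearMap.id ℝ H - f' 0) u₀ := by
        simp [ContinuousLinearMap.sub_apply]
      rw [h2]
      calc ‖(ContinuousLinearMap.id ℝ H - f' 0) u₀‖
          ≤ ‖ContinuousLinearMap.id ℝ H - f' 0‖ * ‖u₀‖ := ContinuousLinearMap.le_opNorm _ _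
        _ ≤ η := by rw [hu₀, mul_one]; exact hIop
    have h3 : ‖u₀‖ - ‖f' 0 u₀‖ ≤ ‖u₀ - f' 0 u₀‖ := norm_sub_norm_le _ _
    rw [hu₀, ← hkdef] at h3
    linarith
  have hkθ₀ : k ≤ θ₀ := by
    have h := (f' 0).le_opNorm u₀
    rw [hu₀, mul_one] at h
    rw [hkdef, hθ₀def]
    exact h
  obtain ⟨kst, hkstdef⟩ : ∃ t : ℝ, t = ‖A u₀‖ := ⟨_, rfl⟩
  have hkst0 : 0 ≤ kst := hkstdef ▸ norm_nonneg _
  have hAnorm : ‖A‖ = θ₀ := by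
    rw [hAdef, hθ₀def]
    exact ContinuousLinearMap.adjoint.norm_map (f' 0)
  have hkstθ₀ : kst ≤ θ₀ := by
    have h := A.le_opNorm u₀
    rw [hu₀, mul_one, hAnorm] at h
    rw [hkstdef]
    exact h
  have hAu₀ : ‖A u₀ - u₀‖ ≤ η := by
    have h1 : A - ContinuousLinearMap.id ℝ H
        = ContinuousLinearMap.adjoint (f' 0 - ContinuousLinearMap.id ℝ H) := by
      rw [map_sub, ContinuousLinearMap.adjoint_id, hAdef]
    have h2 : A u₀ - u₀ = (A - ContinuousLinearMap.id ℝ H) u₀ := by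
      simp [ContinuousLinearMap.sub_apply]
    rw [h2, h1]
    calc ‖(ContinuousLinearMap.adjoint (f' 0 - ContinuousLinearMap.id ℝ H)) u₀‖
        ≤ ‖ContinuousLinearMap.adjoint (f' 0 - ContinuousLinearMap.id ℝ H)‖ * ‖u₀‖ :=
          ContinuousLinearMap.le_opNorm _ _
      _ = ‖f' 0 - ContinuousLinearMap.id ℝ H‖ := by
          rw [hu₀, mul_one]
          exact ContinuousLinearMap.adjoint.norm_map _
      _ = ‖ContinuousLinearMap.id ℝ H - f' 0‖ := norm_sub_rev _ _
      _ ≤ η := hIop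
  -- now work on the small ball B_r
  have hball : closedBall (0 : H) r ⊆ closedBall (0 : H) ρ :=
    closedBall_subset_closedBall hrρ
  have h0r : (0 : H) ∈ closedBall (0 : H) r := mem_closedBall_self hr.le
  obtain ⟨lam, hlamdef⟩ : ∃ t : ℝ, t = θ₀ + γ * r := ⟨_, rfl⟩
  have hlam0 : 0 ≤ lam := hlamdef ▸ add_nonneg hθ₀0 (mul_nonneg hγ hr.le)
  have hfd'bound : ∀ z ∈ closedBall (0 : H) r, ‖f' z‖ ≤ lam := by
    intro z hz
    have h1 := hlip z (hball hz) 0 h0ρ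
    have h2 : ‖z - 0‖ ≤ r := by rw [sub_zero]; exact mem_closedBall_zero_iff.1 hz
    calc ‖f' z‖ ≤ ‖f' z - f' 0‖ + ‖f' 0‖ := by
          simpa using norm_add_le (f' z - f' 0) (f' 0)
      _ ≤ γ * r + θ₀ := add_le_add (le_trans h1 (mul_le_mul_of_nonneg_left h2 hγ))
          (le_of_eq hθ₀def.symm)
      _ = lam := by rw [hlamdef]; ring
  have hflip : ∀ x ∈ closedBall (0 : H) r, ∀ v ∈ closedBall (0 : H) r,
      ‖f x - f v‖ ≤ lam * ‖x - v‖ := by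
    intro x hx v hv
    exact (convex_closedBall (0 : H) r).norm_image_sub_le_of_norm_hasFDerivWithin_le
      (fun z hz => (hdiff z (hball hz)).hasFDerivWithinAt) hfd'bound hv hx
  have hfo : ∀ x ∈ closedBall (0 : H) r, ‖f x - f 0 - f' 0 x‖ ≤ γ * r * r := by
    intro x hx
    have hmv : ‖(f x - f' 0 x) - (f 0 - f' 0 0)‖ ≤ (γ * r) * ‖x - 0‖ := by
      refine (convex_closedBall (0 : H) r).norm_image_sub_le_of_norm_hasFDerivWithin_le
        (f' := fun z => f' z - f' 0)
        (fun z hz => ((hdiff z (hball hz)).sub ((f' 0).hasFDerivAt)).hasFDerivWithinAt)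
        (fun z hz => ?_) h0r hx
      have h1 := hlip z (hball hz) 0 h0ρ
      have h2 : ‖z - 0‖ ≤ r := by rw [sub_zero]; exact mem_closedBall_zero_iff.1 hz
      exact le_trans h1 (mul_le_mul_of_nonneg_left h2 hγ)
    rw [map_zero, sub_zero, sub_zero] at hmv
    have h3 : ‖x‖ ≤ r := mem_closedBall_zero_iff.1 hx
    have h4 : f x - f 0 - f' 0 x = (f x - f' 0 x) - f 0 := by abel
    rw [h4]
    calc ‖(f x - f' 0 x) - f 0‖ ≤ γ * r * ‖x‖ := hmv
      _ ≤ γ * r * r := mul_le_mul_of_nonneg_left h3 (mul_nonneg hγ hr.le)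
  obtain ⟨m, hmdef⟩ : ∃ t : ℝ, t = σ + ρ * k - r * kst - γ * r * r := ⟨_, rfl⟩
  have hminner : ∀ x ∈ closedBall (0 : H) r, m ≤ (inner ℝ (f x) u₀ : ℝ) := by
    intro x hx
    have e1 : (inner ℝ (f x) u₀ : ℝ)
        = inner ℝ (f x - f 0 - f' 0 x) u₀ + a + inner ℝ (f' 0 x) u₀ := by
      rw [hadef, inner_sub_left, inner_sub_left]; ring
    have e2 : |(inner ℝ (f x - f 0 - f' 0 x) u₀ : ℝ)| ≤ γ * r * r := by
      calc |(inner ℝ (f x - f 0 - f' 0 x) u₀ : ℝ)| ≤ ‖f x - f 0 - f' 0 x‖ * ‖u₀‖ :=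
            abs_real_inner_le_norm _ _
        _ ≤ γ * r * r := by rw [hu₀, mul_one]; exact hfo x hx
    have e3 : (inner ℝ (f' 0 x) u₀ : ℝ) = inner ℝ x (A u₀) := by
      rw [hAdef, ContinuousLinearMap.adjoint_inner_right]
    have e4 : |(inner ℝ x (A u₀) : ℝ)| ≤ r * kst := by
      calc |(inner ℝ x (A u₀) : ℝ)| ≤ ‖x‖ * ‖A u₀‖ := abs_real_inner_le_norm _ _
        _ ≤ r * kst := mul_le_mul (mem_closedBall_zero_iff.1 hx) (le_of_eq hkstdef.symm) (hkstdef ▸ hkst0) hr.le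
    have e5 := abs_le.1 e2
    have e6 := abs_le.1 e4
    rw [e1, e3, hmdef]
    linarith [e5.1, e6.1, hak]
  have hmnorm : ∀ x ∈ closedBall (0 : H) r, m ≤ ‖f x‖ := by
    intro x hx
    calc m ≤ (inner ℝ (f x) u₀ : ℝ) := hminner x hx
      _ ≤ ‖f x‖ * ‖u₀‖ := real_inner_le_norm _ _
      _ = ‖f x‖ := by rw [hu₀, mul_one]
  -- numeric facts
  have n2 : θ₀ * r ≤ θ * r := mul_le_mul_of_nonneg_right hθ₀θ hr.le
  have n3 : γ * r * r ≤ γ * ρ * r := by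
    have := mul_nonneg (mul_nonneg hγ (sub_nonneg.2 hrρ)) hr.le
    linarith only [this]
  have n4 : r ≤ η * r + k * r := by
    have := mul_nonneg (sub_nonneg.2 hk1) hr.le
    linarith only [this]
  have n5 : k * r ≤ k * ρ := mul_le_mul_of_nonneg_left hrρ hk0
  have n6 : kst * r ≤ θ₀ * r := mul_le_mul_of_nonneg_right hkstθ₀ hr.le
  have n7 : k * r ≤ θ₀ * r := mul_le_mul_of_nonneg_right hkθ₀ hr.le
  have n8 : 0 ≤ γ * r * r := mul_nonneg (mul_nonneg hγ hr.le) hr.le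
  have n9 : 0 ≤ η * r := mul_nonneg hη0 hr.le
  have n10 : 0 ≤ θ₀ * r := mul_nonneg hθ₀0 hr.le
  have N1 : r < m := by rw [hmdef]; linarith only [hσr', n2, n3, n4, n5, n6, n7, n8, n9, n10, hr]
  have N2 : r * lam < m := by rw [hmdef, hlamdef]; linarith only [hσr', n2, n3, n4, n5, n6, n7, n8, n9, n10, hr]
  have N3 : 2 * (r * lam) < σ + ρ * k - η * r - γ * r * r := by
    rw [hlamdef]; linarith only [hσr', n2, n3, n4, n5, n6, n7, n8, n9, n10, hr]
  have hm0 : 0 < m := lt_trans hr N1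
  -- set up the contraction on the closed ball
  have hfne : ∀ x ∈ closedBall (0 : H) r, ‖f x‖ ≠ 0 := fun x hx =>
    ne_of_gt (lt_of_lt_of_le hm0 (hmnorm x hx))
  have hTnorm : ∀ x ∈ closedBall (0 : H) r, ‖(r * ‖f x‖⁻¹) • f x‖ = r := by
    intro x hx
    rw [norm_smul, Real.norm_eq_abs,
      abs_of_nonneg (mul_nonneg hr.le (inv_nonneg.2 (norm_nonneg _))), mul_assoc,
      inv_mul_cancel₀ (hfne x hx), mul_one]
  haveI : Nonempty (closedBall (0 : H) r) := ⟨⟨0, h0r⟩⟩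
  haveI : CompleteSpace (closedBall (0 : H) r) := (isClosed_closedBall).completeSpace_coe
  set Tm : closedBall (0 : H) r → closedBall (0 : H) r := fun x =>
    ⟨(r * ‖f x.1‖⁻¹) • f x.1, by
      rw [mem_closedBall_zero_iff, hTnorm x.1 x.2]⟩ with hTmdef
  set q : NNReal := ⟨r * lam / m, div_nonneg (mul_nonneg hr.le hlam0) hm0.le⟩ with hqdef
  have hcontr : ContractingWith q Tm := by
    constructor
    · rw [← NNReal.coe_lt_one]
      exact (div_lt_one hm0).2 N2
    · refine LipschitzWith.of_dist_le_mul ?_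
      intro x y
      rw [Subtype.dist_eq, dist_eq_norm, Subtype.dist_eq, dist_eq_norm]
      have hTeq : (Tm x).1 = (r * ‖f x.1‖⁻¹) • f x.1 := rfl
      have hTeq' : (Tm y).1 = (r * ‖f y.1‖⁻¹) • f y.1 := rfl
      rw [hTeq, hTeq']
      calc ‖(r * ‖f x.1‖⁻¹) • f x.1 - (r * ‖f y.1‖⁻¹) • f y.1‖
          ≤ r / m * ‖f x.1 - f y.1‖ :=
            dw_aux (f x.1) (f y.1) m r hm0 (hmnorm x.1 x.2) (hmnorm y.1 y.2) hr.le
        _ ≤ r / m * (lam * ‖x.1 - y.1‖) :=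
            mul_le_mul_of_nonneg_left (hflip x.1 x.2 y.1 y.2) (div_nonneg hr.le hm0.le)
        _ = (r * lam / m) * ‖x.1 - y.1‖ := by ring
  set xsS := ContractingWith.fixedPoint Tm hcontr with hxsSdef
  have hfixpt : Tm xsS = xsS := hcontr.fixedPoint_isFixedPt
  set xs : H := xsS.1 with hxsdef
  have hxsmem : xs ∈ closedBall (0 : H) r := xsS.2
  have hfixeq : (r * ‖f xs‖⁻¹) • f xs = xs := congrArg Subtype.val hfixpt
  have hxs_r : ‖xs‖ = r := by
    conv_lhs => rw [← hfixeq]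
    exact hTnorm xs hxsmem
  have hfxs_m : m ≤ ‖f xs‖ := hmnorm xs hxsmem
  have hfxs_pos : 0 < ‖f xs‖ := lt_of_lt_of_le hm0 hfxs_m
  obtain ⟨c, hcdef⟩ : ∃ t : ℝ, t = ‖f xs‖ / r := ⟨_, rfl⟩
  have hcs : f xs = c • xs := by
    conv_rhs => rw [← hfixeq]
    rw [smul_smul, hcdef]
    rw [show ‖f xs‖ / r * (r * ‖f xs‖⁻¹) = (‖f xs‖ * ‖f xs‖⁻¹) * (r / r) by ring,
      mul_inv_cancel₀ hfxs_pos.ne', div_self hr.ne', one_mul, one_smul]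
  have hc1 : 1 < c := by
    rw [hcdef, lt_div_iff₀ hr]
    linarith [N1, hfxs_m]
  -- strong lower bound on ‖f xs‖
  have hfxs_big : 2 * (r * lam) < ‖f xs‖ := by
    have i0 : (inner ℝ xs u₀ : ℝ) = (r * ‖f xs‖⁻¹) * inner ℝ (f xs) u₀ := by
      conv_lhs => rw [← hfixeq]
      rw [real_inner_smul_left]
    have i1 : 0 ≤ (inner ℝ xs u₀ : ℝ) := by
      rw [i0]
      exact mul_nonneg (mul_nonneg hr.le (inv_nonneg.2 (norm_nonneg _)))
        (le_trans hm0.le (hminner xs hxsmem))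
    have e1 : (inner ℝ (f xs) u₀ : ℝ)
        = inner ℝ (f xs - f 0 - f' 0 xs) u₀ + a + inner ℝ (f' 0 xs) u₀ := by
      rw [hadef, inner_sub_left, inner_sub_left]; ring
    have e2 : |(inner ℝ (f xs - f 0 - f' 0 xs) u₀ : ℝ)| ≤ γ * r * r := by
      calc |(inner ℝ (f xs - f 0 - f' 0 xs) u₀ : ℝ)| ≤ ‖f xs - f 0 - f' 0 xs‖ * ‖u₀‖ :=
            abs_real_inner_le_norm _ _
        _ ≤ γ * r * r := by rw [hu₀, mul_one]; exact hfo xs hxsmem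
    have e3 : (inner ℝ (f' 0 xs) u₀ : ℝ) = inner ℝ xs (A u₀) := by
      rw [hAdef, ContinuousLinearMap.adjoint_inner_right]
    have e4 : (inner ℝ xs (A u₀) : ℝ) = inner ℝ xs u₀ + inner ℝ xs (A u₀ - u₀) := by
      rw [inner_sub_right]; ring
    have e5 : |(inner ℝ xs (A u₀ - u₀) : ℝ)| ≤ r * η := by
      calc |(inner ℝ xs (A u₀ - u₀) : ℝ)| ≤ ‖xs‖ * ‖A u₀ - u₀‖ := abs_real_inner_le_norm _ _
        _ ≤ r * η := by rw [hxs_r]; exact mul_le_mul_of_nonneg_left hAu₀ hr.le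
    have e6 := abs_le.1 e2
    have e7 := abs_le.1 e5
    have e8 : σ + ρ * k - η * r - γ * r * r ≤ (inner ℝ (f xs) u₀ : ℝ) := by
      rw [e1, e3, e4]
      linarith [e6.1, e7.1, hak, i1]
    have e9 : (inner ℝ (f xs) u₀ : ℝ) ≤ ‖f xs‖ := by
      calc (inner ℝ (f xs) u₀ : ℝ) ≤ ‖f xs‖ * ‖u₀‖ := real_inner_le_norm _ _
        _ = ‖f xs‖ := by rw [hu₀, mul_one]
    linarith [N3]
  have hc2lam : 2 * lam < c := by
    rw [hcdef, lt_div_iff₀ hr]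
    linarith only [hfxs_big]
  -- second bullet: distance condition
  have hdxs : ‖f xs - xs‖ = ‖f xs‖ - r := by
    have h1 : f xs - xs = (c - 1) • xs := by
      rw [hcs, sub_smul, one_smul]
    rw [h1, norm_smul, Real.norm_eq_abs, abs_of_nonneg (by linarith : (0:ℝ) ≤ c - 1), hxs_r,
      hcdef]
    field_simp
  have hinf : infDist (f xs) (closedBall (0 : H) r) = ‖f xs‖ - r := by
    refine le_antisymm ?_ ?_
    · calc infDist (f xs) (closedBall (0 : H) r) ≤ dist (f xs) xs :=
            infDist_le_dist_of_mem hxsmem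
        _ = ‖f xs‖ - r := by rw [dist_eq_norm, hdxs]
    · by_contra hcon
      push_neg at hcon
      rw [infDist_lt_iff ⟨0, h0r⟩] at hcon
      obtain ⟨w, hw, hlt⟩ := hcon
      rw [dist_eq_norm] at hlt
      have h1 : ‖f xs‖ - ‖w‖ ≤ ‖f xs - w‖ := norm_sub_norm_le _ _
      have h2 : ‖w‖ ≤ r := mem_closedBall_zero_iff.1 hw
      linarith
  -- third bullet
  have B3 : ∀ x ∈ closedBall (0 : H) r, x ≠ xs → ‖f x - xs‖ < ‖f x - x‖ := by
    intro x hx hne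
    have hxr : ‖x‖ ≤ r := mem_closedBall_zero_iff.1 hx
    have hd0 : 0 < ‖x - xs‖ ^ 2 := pow_pos (norm_pos_iff.2 (sub_ne_zero.2 hne)) 2
    have hxsq : ‖x‖ ^ 2 ≤ r ^ 2 := pow_le_pow_left₀ (norm_nonneg x) hxr 2
    have q1 : (inner ℝ (f x - f xs) (x - xs) : ℝ) ≤ lam * ‖x - xs‖ ^ 2 := by
      calc (inner ℝ (f x - f xs) (x - xs) : ℝ) ≤ ‖f x - f xs‖ * ‖x - xs‖ := real_inner_le_norm _ _
        _ ≤ (lam * ‖x - xs‖) * ‖x - xs‖ :=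
            mul_le_mul_of_nonneg_right (hflip x hx xs hxsmem) (norm_nonneg _)
        _ = lam * ‖x - xs‖ ^ 2 := by ring
    have q2 : ‖x - xs‖ ^ 2 = ‖x‖ ^ 2 - 2 * (inner ℝ x xs : ℝ) + r ^ 2 := by
      rw [norm_sub_sq_real, hxs_r]
    have q3 : (inner ℝ (f x) (x - xs) : ℝ)
        = inner ℝ (f x - f xs) (x - xs) + c * (inner ℝ xs (x - xs) : ℝ) := by
      rw [inner_sub_left (f x) (f xs), hcs, real_inner_smul_left]
      ring
    have q4 : (inner ℝ xs (x - xs) : ℝ) = inner ℝ xs x - r ^ 2 := by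
      rw [inner_sub_right, real_inner_self_eq_norm_mul_norm, hxs_r]
      ring
    have q4c : c * (inner ℝ xs (x - xs) : ℝ) = c * (inner ℝ xs x : ℝ) - c * r ^ 2 := by
      rw [q4]; ring
    have E1 : ‖f x - xs‖ ^ 2 - ‖f x - x‖ ^ 2
        = 2 * (inner ℝ (f x) (x - xs) : ℝ) + r ^ 2 - ‖x‖ ^ 2 := by
      rw [norm_sub_sq_real, norm_sub_sq_real, hxs_r, inner_sub_right]
      ring
    have q2c : c * ‖x - xs‖ ^ 2 = c * ‖x‖ ^ 2 - 2 * (c * (inner ℝ x xs : ℝ)) + c * r ^ 2 := by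
      rw [q2]; ring
    have q5 : (inner ℝ x xs : ℝ) = inner ℝ xs x := real_inner_comm _ _
    have p1 : 0 < (c - 2 * lam) * ‖x - xs‖ ^ 2 := mul_pos (by linarith only [hc2lam]) hd0
    have p2 : 0 ≤ (c - 1) * (r ^ 2 - ‖x‖ ^ 2) :=
      mul_nonneg (by linarith only [hc1]) (by linarith only [hxsq])
    have hsq : ‖f x - xs‖ ^ 2 < ‖f x - x‖ ^ 2 := by
      have q5c : c * (inner ℝ x xs : ℝ) = c * (inner ℝ xs x : ℝ) := by rw [q5]
      linarith only [E1, q1, q2c, q3, q4c, p1, p2, q5c]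
    exact lt_of_pow_lt_pow_left₀ 2 (norm_nonneg _) hsq
  refine ⟨xs, ⟨mem_sphere_zero_iff_norm.2 hxs_r, by rw [hdxs, hinf], B3⟩, ?_⟩
  rintro y ⟨hy1, hy2, hy3⟩
  by_contra hne
  have hymem : y ∈ closedBall (0 : H) r := sphere_subset_closedBall hy1
  have h1 : ‖f y - xs‖ < ‖f y - y‖ := B3 y hymem hne
  have h3 : infDist (f y) (closedBall (0 : H) r) ≤ dist (f y) xs :=
    infDist_le_dist_of_mem hxsmem
  rw [dist_eq_norm] at h3
  rw [hy2] at h1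
  linarith
end

section
/- Let H be a real Hilbert space, ρ > 0, and f : B_ρ → H a C¹ function with Lipschitzian derivative. Then the following are equivalent: (i) for each sufficiently small r > 0 there exists a unique x* ∈ S_r with ‖f(x*) − x*‖ = dist(f(x*), B_r) and ‖f(x) − x*‖ < ‖f(x) − x‖ for all x ∈ B_r \ {x*}; (ii) f(0) ≠ 0. -/
open Metric
open scoped InnerProductSpace

lemma norm_unit_sub' {H : Type*} [NormedAddCommGroup H] [InnerProductSpace ℝ H]
    (z w : H) (c : ℝ) (hc : 0 < c) (hz : c ≤ ‖z‖) (hw : c ≤ ‖w‖) :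
    ‖‖z‖⁻¹ • z - ‖w‖⁻¹ • w‖ ≤ (2 / c) * ‖z - w‖ := by
  have hz0 : (0:ℝ) < ‖z‖ := lt_of_lt_of_le hc hz
  have hw0 : (0:ℝ) < ‖w‖ := lt_of_lt_of_le hc hw
  have h1 : ‖z‖⁻¹ • z - ‖w‖⁻¹ • w = ‖z‖⁻¹ • (z - w) + (‖z‖⁻¹ - ‖w‖⁻¹) • w := by
    rw [smul_sub, sub_smul]; abel
  rw [h1]
  have h2 : ‖‖z‖⁻¹ • (z - w)‖ ≤ c⁻¹ * ‖z - w‖ := by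
    rw [norm_smul, Real.norm_eq_abs, abs_of_pos (inv_pos.mpr hz0)]
    gcongr
  have h3 : ‖(‖z‖⁻¹ - ‖w‖⁻¹) • w‖ ≤ c⁻¹ * ‖z - w‖ := by
    rw [norm_smul, Real.norm_eq_abs]
    have : |‖z‖⁻¹ - ‖w‖⁻¹| = |‖w‖ - ‖z‖| / (‖z‖ * ‖w‖) := by
      rw [show ‖z‖⁻¹ - ‖w‖⁻¹ = (‖w‖ - ‖z‖) / (‖z‖ * ‖w‖) by field_simp]
      rw [abs_div, abs_of_pos (by positivity : (0:ℝ) < ‖z‖ * ‖w‖)]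
    rw [this]
    have h4 : |‖w‖ - ‖z‖| ≤ ‖z - w‖ := by
      rw [abs_sub_comm]; exact abs_norm_sub_norm_le z w
    have e1 : |‖w‖ - ‖z‖| / (‖z‖ * ‖w‖) * ‖w‖ = |‖w‖ - ‖z‖| / ‖z‖ := by
      field_simp
    rw [e1]
    have e2 : |‖w‖ - ‖z‖| / ‖z‖ ≤ ‖z - w‖ / c := by gcongr
    calc |‖w‖ - ‖z‖| / ‖z‖ ≤ ‖z - w‖ / c := e2
      _ = c⁻¹ * ‖z - w‖ := by ring
  calc ‖‖z‖⁻¹ • (z - w) + (‖z‖⁻¹ - ‖w‖⁻¹) • w‖ ≤ ‖‖z‖⁻¹ • (z - w)‖ + ‖(‖z‖⁻¹ - ‖w‖⁻¹) • w‖ :=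
        norm_add_le _ _
    _ ≤ c⁻¹ * ‖z - w‖ + c⁻¹ * ‖z - w‖ := add_le_add h2 h3
    _ = (2 / c) * ‖z - w‖ := by ring

set_option maxHeartbeats 2000000 in
theorem stmt16 {H : Type*} [NormedAddCommGroup H] [InnerProductSpace ℝ H] [CompleteSpace H]
    (ρ γ : ℝ) (hρ : 0 < ρ) (hγ : 0 ≤ γ)
    (f : H → H) (f' : H → H →L[ℝ] H)
    (hdiff : ∀ x ∈ closedBall (0 : H) ρ, HasFDerivAt f (f' x) x)
    (hlip : ∀ x ∈ closedBall (0 : H) ρ, ∀ v ∈ closedBall (0 : H) ρ,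
      ‖f' x - f' v‖ ≤ γ * ‖x - v‖) :
    (∃ ε > 0, ∀ r : ℝ, 0 < r → r ≤ ε →
      ∃! xs : H, xs ∈ sphere (0 : H) r ∧
        ‖f xs - xs‖ = infDist (f xs) (closedBall (0 : H) r) ∧
        ∀ x ∈ closedBall (0 : H) r, x ≠ xs → ‖f x - xs‖ < ‖f x - x‖)
    ↔ f 0 ≠ 0 := by
  constructor
  · rintro ⟨ε, hε, hall⟩ h0
    obtain ⟨xs, ⟨hxs_s, -, h2⟩, -⟩ := hall ε hε le_rfl
    have hxs0 : (0:H) ≠ xs := by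
      intro h
      rw [← h, mem_sphere_zero_iff_norm, norm_zero] at hxs_s
      exact hε.ne hxs_s
    have hlt := h2 0 (mem_closedBall_self hε.le) hxs0
    rw [h0, sub_zero, norm_zero, zero_sub, norm_neg] at hlt
    exact absurd hlt (norm_nonneg xs).not_gt
  · intro h0
    set δ : ℝ := ‖f 0‖ with hδdef
    have hδ : 0 < δ := norm_pos_iff.mpr h0
    set M : ℝ := ‖f' 0‖ + γ * ρ + 1 with hMdef
    have hM1 : 1 ≤ M := by
      have h1 := norm_nonneg (f' 0)
      have h2 : 0 ≤ γ * ρ := mul_nonneg hγ hρ.le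
      rw [hMdef]; linarith
    have hM0 : 0 < M := lt_of_lt_of_le one_pos hM1
    have h0mem : (0:H) ∈ closedBall (0:H) ρ := mem_closedBall_self hρ.le
    -- derivative bound on the big ball
    have hDbound : ∀ x ∈ closedBall (0:H) ρ, ‖f' x‖ ≤ M := by
      intro x hx
      have h1 : ‖f' x‖ ≤ ‖f' x - f' 0‖ + ‖f' 0‖ := by
        calc ‖f' x‖ = ‖(f' x - f' 0) + f' 0‖ := by rw [sub_add_cancel]
          _ ≤ ‖f' x - f' 0‖ + ‖f' 0‖ := norm_add_le _ _
      have h2 : ‖f' x - f' 0‖ ≤ γ * ‖x - 0‖ := hlip x hx 0 h0mem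
      have h3 : ‖x - 0‖ ≤ ρ := by
        rw [sub_zero]; exact mem_closedBall_zero_iff.mp hx
      have h4 : γ * ‖x - 0‖ ≤ γ * ρ := mul_le_mul_of_nonneg_left h3 hγ
      rw [hMdef]; linarith
    -- f is M-Lipschitz on the big ball
    have hlipf : ∀ x ∈ closedBall (0:H) ρ, ∀ y ∈ closedBall (0:H) ρ,
        ‖f x - f y‖ ≤ M * ‖x - y‖ :=
      fun x hx y hy =>
        (convex_closedBall (0:H) ρ).norm_image_sub_le_of_norm_hasFDerivWithin_le
          (fun z hz => (hdiff z hz).hasFDerivWithinAt) hDbound hy hx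
    refine ⟨min ρ (δ / (8 * M)), lt_min hρ (by positivity), ?_⟩
    intro r hr hrε
    have hrρ : r ≤ ρ := hrε.trans (min_le_left _ _)
    have hsub : closedBall (0:H) r ⊆ closedBall (0:H) ρ := closedBall_subset_closedBall hrρ
    have h8 : r * (8 * M) ≤ δ := by
      have := hrε.trans (min_le_right _ _)
      exact (le_div_iff₀ (by positivity)).mp this
    -- lower bound for ‖f x‖ on the small ball
    have hfl : ∀ x ∈ closedBall (0:H) r, δ / 2 ≤ ‖f x‖ := by
      intro x hx
      have h1 : ‖f x - f 0‖ ≤ M * ‖x - 0‖ := hlipf x (hsub hx) 0 h0mem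
      have h2 : ‖x - 0‖ ≤ r := by rw [sub_zero]; exact mem_closedBall_zero_iff.mp hx
      have h3 : ‖f x - f 0‖ ≤ M * r := h1.trans (mul_le_mul_of_nonneg_left h2 hM0.le)
      have h4 : δ - ‖f x‖ ≤ ‖f x - f 0‖ := by
        have := norm_sub_norm_le (f 0) (f x)
        rw [← norm_neg (f 0 - f x), neg_sub] at this
        linarith [this]
      nlinarith
    have hballr : (0:H) ∈ closedBall (0:H) r := mem_closedBall_self hr.le
    -- set up the contraction on the closed ball
    haveI hcs : CompleteSpace (closedBall (0:H) r) :=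
      isClosed_closedBall.completeSpace_coe
    haveI hne : Nonempty (closedBall (0:H) r) := ⟨⟨0, hballr⟩⟩
    have hfpos : ∀ x : closedBall (0:H) r, (0:ℝ) < ‖f x.1‖ :=
      fun x => lt_of_lt_of_le (by positivity) (hfl x.1 x.2)
    have hTval : ∀ x : closedBall (0:H) r, ‖((r / ‖f x.1‖) • f x.1 : H)‖ = r := by
      intro x
      rw [norm_smul, Real.norm_eq_abs, abs_of_pos (div_pos hr (hfpos x))]
      exact div_mul_cancel₀ r (hfpos x).ne'
    set T : closedBall (0:H) r → closedBall (0:H) r :=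
      fun x => ⟨(r / ‖f x.1‖) • f x.1, by
        rw [mem_closedBall_zero_iff, hTval x]⟩ with hTdef
    have hTlip : LipschitzWith (1/2 : NNReal) T := by
      apply LipschitzWith.of_dist_le_mul
      intro x y
      rw [Subtype.dist_eq, Subtype.dist_eq, dist_eq_norm, dist_eq_norm]
      have hx1 : (T x).1 = r • (‖f x.1‖⁻¹ • f x.1) := by
        simp only [hTdef, smul_smul, div_eq_mul_inv]
      have hy1 : (T y).1 = r • (‖f y.1‖⁻¹ • f y.1) := by
        simp only [hTdef, smul_smul, div_eq_mul_inv]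
      rw [hx1, hy1, ← smul_sub, norm_smul, Real.norm_eq_abs, abs_of_pos hr]
      have key : ‖‖f x.1‖⁻¹ • f x.1 - ‖f y.1‖⁻¹ • f y.1‖ ≤ (2 / (δ/2)) * ‖f x.1 - f y.1‖ :=
        norm_unit_sub' _ _ (δ/2) (by positivity) (hfl x.1 x.2) (hfl y.1 y.2)
      have hff : ‖f x.1 - f y.1‖ ≤ M * ‖x.1 - y.1‖ := hlipf x.1 (hsub x.2) y.1 (hsub y.2)
      have hcoe : ((1/2 : NNReal) : ℝ) = 1/2 := by norm_num
      rw [hcoe]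
      calc r * ‖‖f x.1‖⁻¹ • f x.1 - ‖f y.1‖⁻¹ • f y.1‖
          ≤ r * ((2 / (δ/2)) * (M * ‖x.1 - y.1‖)) := by
            apply mul_le_mul_of_nonneg_left _ hr.le
            exact key.trans (mul_le_mul_of_nonneg_left hff (by positivity))
        _ = (r * (4 * M) / δ) * ‖x.1 - y.1‖ := by field_simp; ring
        _ ≤ (1/2) * ‖x.1 - y.1‖ := by
            apply mul_le_mul_of_nonneg_right _ (norm_nonneg _)
            rw [div_le_iff₀ hδ]
            nlinarith
    have hT : ContractingWith (1/2 : NNReal) T := ⟨by rw [← NNReal.coe_lt_coe]; norm_num, hTlip⟩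
    obtain ⟨x0, hfix⟩ : ∃ x0 : closedBall (0:H) r, T x0 = x0 :=
      ⟨ContractingWith.fixedPoint T hT, hT.fixedPoint_isFixedPt⟩
    obtain ⟨xs, hxs_ball0, hfixv⟩ : ∃ xs ∈ closedBall (0:H) r,
        (r / ‖f xs‖) • f xs = xs := ⟨x0.1, x0.2, congrArg Subtype.val hfix⟩
    clear hfix x0
    set a : ℝ := ‖f xs‖ with hadef
    have ha : δ / 2 ≤ a := hfl xs hxs_ball0
    have ha0 : 0 < a := lt_of_lt_of_le (by positivity) ha
    have hxs_norm : ‖xs‖ = r := by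
      rw [← hfixv, norm_smul, Real.norm_eq_abs, abs_of_pos (div_pos hr ha0), ← hadef]
      exact div_mul_cancel₀ r ha0.ne'
    have hra : r < a := by nlinarith
    have hsph : xs ∈ sphere (0:H) r := by
      rw [mem_sphere_zero_iff_norm]; exact hxs_norm
    have hxs_ball : xs ∈ closedBall (0:H) r := hxs_ball0
    -- first property
    have hval : ‖f xs - xs‖ = a - r := by
      have h1 : f xs - xs = (1 - r / a) • f xs := by
        rw [sub_smul, one_smul, hfixv]
      rw [h1, norm_smul, Real.norm_eq_abs, ← hadef,
        abs_of_nonneg (by rw [sub_nonneg]; exact (div_le_one ha0).mpr hra.le)]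
      rw [sub_mul, one_mul, div_mul_cancel₀ _ ha0.ne']
    have hinf : infDist (f xs) (closedBall (0:H) r) = a - r := by
      apply le_antisymm
      · have := infDist_le_dist_of_mem hxs_ball (x := f xs)
        rwa [dist_eq_norm, hval] at this
      · by_contra hcon
        push_neg at hcon
        rw [infDist_lt_iff ⟨0, hballr⟩] at hcon
        obtain ⟨y, hy, hlt⟩ := hcon
        rw [dist_eq_norm] at hlt
        have h1 : a - ‖y‖ ≤ ‖f xs - y‖ := by
          have := norm_sub_norm_le (f xs) y
          linarith [this]
        have h2 : ‖y‖ ≤ r := mem_closedBall_zero_iff.mp hy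
        linarith
    have hprop1 : ‖f xs - xs‖ = infDist (f xs) (closedBall (0:H) r) := by
      rw [hval, hinf]
    -- f xs is a positive multiple of xs
    have hfxs : f xs = (a / r) • xs := by
      conv_rhs => rw [← hfixv]
      rw [smul_smul, show a / r * (r / a) = 1 by field_simp, one_smul]
    -- second property
    have hprop2 : ∀ x ∈ closedBall (0:H) r, x ≠ xs → ‖f x - xs‖ < ‖f x - x‖ := by
      intro x hx hxne
      have hxr : ‖x‖ ≤ r := mem_closedBall_zero_iff.mp hx
      have hdpos : (0:ℝ) < ‖xs - x‖ := by
        rw [norm_pos_iff, sub_ne_zero]; exact (Ne.symm hxne)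
      have hff : ‖f x - f xs‖ ≤ M * ‖x - xs‖ := hlipf x (hsub hx) xs (hsub hxs_ball)
      set c : ℝ := a / r with hcdef
      have hc4 : 4 * M ≤ c := by
        rw [hcdef, le_div_iff₀ hr]; nlinarith
      have e1 : ⟪f xs, xs - x⟫_ℝ = c * ⟪xs, xs - x⟫_ℝ := by
        rw [hfxs, real_inner_smul_left]
      have e2 : ⟪xs, xs - x⟫_ℝ = r^2 - ⟪xs, x⟫_ℝ := by
        rw [inner_sub_right, real_inner_self_eq_norm_sq, hxs_norm]
      have e3 : ‖xs - x‖^2 = r^2 - 2 * ⟪xs, x⟫_ℝ + ‖x‖^2 := by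
        rw [norm_sub_sq_real, hxs_norm]
      have e4 : ⟪f x, xs - x⟫_ℝ = ⟪f xs, xs - x⟫_ℝ + ⟪f x - f xs, xs - x⟫_ℝ := by
        rw [inner_sub_left]; ring
      have e5 : -(M * ‖xs - x‖^2) ≤ ⟪f x - f xs, xs - x⟫_ℝ := by
        have h1 := abs_real_inner_le_norm (f x - f xs) (xs - x)
        have h2 : ‖f x - f xs‖ * ‖xs - x‖ ≤ M * ‖xs - x‖^2 := by
          rw [norm_sub_rev x xs] at hff
          nlinarith [norm_nonneg (xs - x)]
        have h3 := neg_abs_le ⟪f x - f xs, xs - x⟫_ℝ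
        linarith [h1, h2, h3]
      have e0 : ⟪f x, xs - x⟫_ℝ = ⟪f x, xs⟫_ℝ - ⟪f x, x⟫_ℝ := inner_sub_right _ _ _
      have hsq : ‖f x - xs‖^2 < ‖f x - x‖^2 := by
        rw [norm_sub_sq_real, norm_sub_sq_real, hxs_norm]
        have hx2 : ‖x‖^2 ≤ r^2 := by nlinarith [norm_nonneg x]
        nlinarith [mul_nonneg (by linarith : (0:ℝ) ≤ c - 1) (by linarith : (0:ℝ) ≤ r^2 - ‖x‖^2),
          mul_pos (by nlinarith : (0:ℝ) < c - 2*M) (by positivity : (0:ℝ) < ‖xs - x‖^2)]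
      exact lt_of_pow_lt_pow_left₀ 2 (norm_nonneg _) hsq
    refine ⟨xs, ⟨hsph, hprop1, hprop2⟩, ?_⟩
    rintro y ⟨hy_s, hy1, -⟩
    by_contra hne
    have hy_ball : y ∈ closedBall (0:H) r := sphere_subset_closedBall hy_s
    have h1 : ‖f y - xs‖ < ‖f y - y‖ := hprop2 y hy_ball hne
    have h2 : ‖f y - y‖ ≤ ‖f y - xs‖ := by
      rw [hy1]
      have := infDist_le_dist_of_mem hxs_ball (x := f y)
      rwa [dist_eq_norm] at this
    linarith
end
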